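/- arXiv:2001.00415 — 11 statements merged into one kernel-verified Lean document; each statement's English description precedes it below -/
import Mathlib

section
/- Let Γ be a finite directed acyclic graph (a game graph, i.e., every vertex has finite maximum walk length) and let B be an independent set of vertices of Γ (no edge joins two vertices of B). Define Q* = B ∪ ⋃_{b∈B} N⁻(b), the union of B with all in-neighbors of elements of B. Then a subset Q of vertices satisfies that the P-position set of the induced subgraph Γ[Q] equals B if and only if B ⊆ Q ⊆ Q*. -/
/-- The P-positions of a digraph `Γ` (given as an edge relation) whose reversed edge
relation is well-founded (i.e. a game graph), defined by well-founded recursion: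
a vertex is a P-position iff none of its out-neighbors is a P-position. -/
def pposAux {V : Type*} (Γ : V → V → Prop) (hwf : WellFounded fun a b => Γ b a) : V → Prop :=
  hwf.fix fun v ih => ∀ y, ∀ h : Γ v y, ¬ ih y h

/-- The P-position set of a game graph. -/
def pposSet {V : Type*} (Γ : V → V → Prop) (hwf : WellFounded fun a b => Γ b a) : Set V :=
  {v | pposAux Γ hwf v}

/-- The edge relation of the subgraph of `Γ` induced on the vertex set `Q`. -/
def inducedRel {V : Type*} (Γ : V → V → Prop) (Q : Set V) : V → V → Prop :=
  fun a b => a ∈ Q ∧ b ∈ Q ∧ Γ a b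

theorem inducedRel_wf {V : Type*} {Γ : V → V → Prop} (Q : Set V)
    (hwf : WellFounded fun a b => Γ b a) :
    WellFounded fun a b => inducedRel Γ Q b a :=
  Subrelation.wf (fun h => h.2.2) hwf

/-- The P-position set of the subgraph of `Γ` induced on `Q`. -/
def pposSetOn {V : Type*} (Γ : V → V → Prop) (Q : Set V)
    (hwf : WellFounded fun a b => Γ b a) : Set V :=
  {v | v ∈ Q ∧ pposAux (inducedRel Γ Q) (inducedRel_wf Q hwf) v}

/-- `Q* = B ∪ ⋃_{b ∈ B} N⁻(b)`: the union of `B` with all in-neighbors of elements of `B`. -/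
def qstar {V : Type*} (Γ : V → V → Prop) (B : Set V) : Set V :=
  B ∪ {v | ∃ b ∈ B, Γ v b}

lemma pposAux_iff {V : Type*} (Γ : V → V → Prop) (hwf : WellFounded fun a b => Γ b a)
    (v : V) : pposAux Γ hwf v ↔ ∀ y, Γ v y → ¬ pposAux Γ hwf y := by
  rw [pposAux, WellFounded.fix_eq]

/-- For a finite game graph `Γ` and an independent set `B` of its vertices, a vertex
subset `Q` has the property that the P-position set of the induced subgraph `Γ[Q]`
equals `B` if and only if `B ⊆ Q ⊆ Q*`. -/
theorem stmt_0 {V : Type*} [Fintype V] (Γ : V → V → Prop)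
    (hwf : WellFounded fun a b => Γ b a) (B : Set V)
    (hind : ∀ a ∈ B, ∀ b ∈ B, ¬ Γ a b) (Q : Set V) :
    pposSetOn Γ Q hwf = B ↔ B ⊆ Q ∧ Q ⊆ qstar Γ B := by
  constructor
  · intro h
    constructor
    · intro b hb
      rw [← h] at hb
      exact hb.1
    · intro v hv
      by_cases hvB : v ∈ B
      · exact Or.inl hvB
      · have : v ∉ pposSetOn Γ Q hwf := by rw [h]; exact hvB
        simp only [pposSetOn, Set.mem_setOf_eq, not_and] at this
        have := this hv
        rw [pposAux_iff] at this
        push_neg at this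
        obtain ⟨y, hy, hpy⟩ := this
        have : y ∈ pposSetOn Γ Q hwf := ⟨hy.2.1, hpy⟩
        rw [h] at this
        exact Or.inr ⟨y, this, hy.2.2⟩
  · rintro ⟨hBQ, hQstar⟩
    have key : ∀ v, v ∈ Q → (pposAux (inducedRel Γ Q) (inducedRel_wf Q hwf) v ↔ v ∈ B) := by
      intro v
      induction v using (inducedRel_wf Q hwf).induction with
      | _ v ih =>
        intro hvQ
        rw [pposAux_iff]
        constructor
        · intro h
          by_contra hvB
          rcases hQstar hvQ with h1 | ⟨b, hbB, hvb⟩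
          · exact hvB h1
          · have hbQ := hBQ hbB
            exact h b ⟨hvQ, hbQ, hvb⟩ ((ih b ⟨hvQ, hbQ, hvb⟩ hbQ).2 hbB)
        · intro hvB y hy hpy
          have hyB := (ih y hy hy.2.1).1 hpy
          exact hind v hvB y hyB hy.2.2
    ext v
    simp only [pposSetOn, Set.mem_setOf_eq]
    constructor
    · rintro ⟨hvQ, hp⟩
      exact (key v hvQ).1 hp
    · intro hvB
      exact ⟨hBQ hvB, (key v (hBQ hvB)).2 hvB⟩
end

section
/- Let Γ be a finite directed acyclic graph and let B be an independent set of vertices of Γ. Let Q* = B ∪ ⋃_{b∈B} N⁻(b). Then the P-position set of the induced subgraph Γ[Q*] equals B. -/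
/-- For a finite game graph `Γ` and an independent set `B` of its vertices, the
P-position set of the subgraph induced on `Q* = B ∪ ⋃_{b ∈ B} N⁻(b)` equals `B`. -/
theorem stmt_1 {V : Type*} [Fintype V] (Γ : V → V → Prop)
    (hwf : WellFounded fun a b => Γ b a) (B : Set V)
    (hind : ∀ a ∈ B, ∀ b ∈ B, ¬ Γ a b) :
    pposSetOn Γ (qstar Γ B) hwf = B := by
  have key : ∀ v : V, (v ∈ B → pposAux (inducedRel Γ (qstar Γ B)) (inducedRel_wf _ hwf) v) ∧
      (v ∈ qstar Γ B → v ∉ B → ¬ pposAux (inducedRel Γ (qstar Γ B)) (inducedRel_wf _ hwf) v) := by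
    intro v
    induction v using hwf.induction with
    | _ v ih =>
      constructor
      · intro hvB
        rw [pposAux_iff]
        intro y hy
        obtain ⟨-, hyQ, hvy⟩ := hy
        have hyB : y ∉ B := fun hyB => hind v hvB y hyB hvy
        exact (ih y hvy).2 hyQ hyB
      · intro hvQ hvB hp
        rcases hvQ with hvB' | ⟨b, hbB, hvb⟩
        · exact hvB hvB'
        · rw [pposAux_iff] at hp
          exact hp b ⟨Or.inr ⟨b, hbB, hvb⟩, Or.inl hbB, hvb⟩ ((ih b hvb).1 hbB)
  ext v
  constructor
  · rintro ⟨hvQ, hp⟩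
    by_contra hvB
    exact (key v).2 hvQ hvB hp
  · intro hvB
    exact ⟨Or.inl hvB, (key v).1 hvB⟩
end

section
/- Let B be an independent set in Welter's game Γ_{v,k}. Then every k-subset P of [v] not in B has at most k out-neighbors in B, i.e., |N⁺(P) ∩ B| ≤ k. -/
/-- The edge relation of Welter's game: there is an edge from `P` to `P^{(p q)}`
whenever `p ∈ P`, `q ∉ P`, `q < p`. -/
def welterEdge (P Q : Finset ℕ) : Prop :=
  ∃ p ∈ P, ∃ q, q ∉ P ∧ q < p ∧ Q = insert q (P.erase p)

/-- The vertex set of Welter's game `Γ_{v,k}`: the `k`-element subsets of `{0, ..., v-1}`. -/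
def welterVertex (v k : ℕ) : Set (Finset ℕ) :=
  {P | P ⊆ Finset.range v ∧ P.card = k}

/-- The edge relation of Welter's game `Γ_{v,k}`. -/
def welterRel (v k : ℕ) : Finset ℕ → Finset ℕ → Prop :=
  fun P Q => P ∈ welterVertex v k ∧ Q ∈ welterVertex v k ∧ welterEdge P Q

/-- If `B` is an independent set in Welter's game `Γ_{v,k}`, then every `k`-subset `P`
of `{0, ..., v-1}` not in `B` has at most `k` out-neighbors in `B`. -/
theorem stmt_6 (v k : ℕ) (B : Finset (Finset ℕ))
    (hBvert : ∀ b ∈ B, b ∈ welterVertex v k)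
    (hind : ∀ b₁ ∈ B, ∀ b₂ ∈ B, ¬ welterRel v k b₁ b₂)
    (P : Finset ℕ) (hP : P ∈ welterVertex v k) (hPB : P ∉ B) :
    Set.ncard {Q | Q ∈ B ∧ welterRel v k P Q} ≤ k := by
  classical
  set S : Set (Finset ℕ) := {Q | Q ∈ B ∧ welterRel v k P Q}
  -- For each Q in S, P \ Q = {p} for the witness p
  have key : ∀ Q ∈ S, ∀ p ∈ P, ∀ q, q ∉ P → q < p → Q = insert q (P.erase p) →
      P \ Q = {p} := by
    intro Q _ p hp q hq hqp hQ
    ext x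
    simp only [Finset.mem_sdiff, hQ, Finset.mem_insert, Finset.mem_erase,
      Finset.mem_singleton]
    constructor
    · rintro ⟨hxP, hxQ⟩
      by_contra hxp
      exact hxQ (Or.inr ⟨hxp, hxP⟩)
    · rintro rfl
      refine ⟨hp, ?_⟩
      rintro (rfl | ⟨hne, _⟩)
      · exact hq hp
      · exact hne rfl
  have hinj : Set.InjOn (fun Q => if h : (P \ Q).Nonempty then (P \ Q).min' h else 0) S := by
    intro Q₁ hQ₁ Q₂ hQ₂ heq
    have hS₁ := hQ₁
    have hS₂ := hQ₂
    obtain ⟨hQ₁B, _, _, p₁, hp₁, q₁, hq₁, hq₁p, hQ₁eq⟩ := hQ₁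
    obtain ⟨hQ₂B, _, _, p₂, hp₂, q₂, hq₂, hq₂p, hQ₂eq⟩ := hQ₂
    have h1 := key Q₁ hS₁ p₁ hp₁ q₁ hq₁ hq₁p hQ₁eq
    have h2 := key Q₂ hS₂ p₂ hp₂ q₂ hq₂ hq₂p hQ₂eq
    have hne1 : (P \ Q₁).Nonempty := by rw [h1]; exact ⟨p₁, Finset.mem_singleton_self p₁⟩
    have hne2 : (P \ Q₂).Nonempty := by rw [h2]; exact ⟨p₂, Finset.mem_singleton_self p₂⟩
    simp only [dif_pos hne1, dif_pos hne2] at heq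
    have hm1 : (P \ Q₁).min' hne1 = p₁ := by simp [h1]
    have hm2 : (P \ Q₂).min' hne2 = p₂ := by simp [h2]
    have hpp : p₁ = p₂ := by rw [← hm1, ← hm2, heq]
    subst hpp
    -- if q₁ = q₂ done; else edge between Q's
    by_cases hqq : q₁ = q₂
    · rw [hQ₁eq, hQ₂eq, hqq]
    · -- wlog via a general claim
      have edge : ∀ a b : ℕ, a ∉ P → b ∉ P → a < b → b < p₁ →
          welterEdge (insert b (P.erase p₁)) (insert a (P.erase p₁)) := by
        intro a b ha hb hab _
        refine ⟨b, Finset.mem_insert_self _ _, a, ?_, hab, ?_⟩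
        · simp only [Finset.mem_insert, Finset.mem_erase, not_or]
          exact ⟨hab.ne, fun h => ha h.2⟩
        · rw [Finset.erase_insert]
          simp only [Finset.mem_erase, not_and]
          intro _; exact fun h => hb h
      rcases lt_or_gt_of_ne hqq with h | h
      · exfalso
        apply hind Q₂ hQ₂B Q₁ hQ₁B
        exact ⟨hBvert Q₂ hQ₂B, hBvert Q₁ hQ₁B, by
          rw [hQ₁eq, hQ₂eq]; exact edge q₁ q₂ hq₁ hq₂ h hq₂p⟩
      · exfalso
        apply hind Q₁ hQ₁B Q₂ hQ₂B
        exact ⟨hBvert Q₁ hQ₁B, hBvert Q₂ hQ₂B, by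
          rw [hQ₁eq, hQ₂eq]; exact edge q₂ q₁ hq₂ hq₁ h hq₁p⟩
  have hmaps : ∀ Q ∈ S, (fun Q => if h : (P \ Q).Nonempty then (P \ Q).min' h else 0) Q
      ∈ (↑P : Set ℕ) := by
    intro Q hQ
    have hS := hQ
    obtain ⟨_, _, _, p, hp, q, hq, hqp, hQeq⟩ := hQ
    have h1 := key Q hS p hp q hq hqp hQeq
    have hne : (P \ Q).Nonempty := by rw [h1]; exact ⟨p, Finset.mem_singleton_self p⟩
    simp only [dif_pos hne]
    have := Finset.min'_mem (P \ Q) hne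
    exact (Finset.mem_sdiff.mp this).1
  calc S.ncard ≤ (↑P : Set ℕ).ncard :=
        Set.ncard_le_ncard_of_injOn _ hmaps hinj (P.finite_toSet)
    _ = P.card := Set.ncard_coe_finset P
    _ = k := hP.2
end

section
/- Let D be a t-(v,k,λ) design with t ≥ 1 whose block set B is an independent set in Welter's game Γ_{v,k}. For 0 ≤ i ≤ k let a_i(D) be the number of k-subsets P of [v] not in B with exactly i out-neighbors in B. Then Σ_{i=0}^{k} i·a_i(D) = λ₀·k·(v−k)/2, where λ₀ is the number of blocks. -/
/-- A `t`-`(v, k, lam)` design with point set `{0, ..., v-1}` and block set `𝔅`: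
every block is a `k`-subset of `{0, ..., v-1}` and every `t`-subset of `{0, ..., v-1}`
is contained in exactly `lam` blocks. -/
def IsDesign (v t k lam : ℕ) (𝔅 : Finset (Finset ℕ)) : Prop :=
  (∀ b ∈ 𝔅, b ⊆ Finset.range v ∧ b.card = k) ∧
  ∀ T : Finset ℕ, T ⊆ Finset.range v → T.card = t →
    (𝔅.filter fun b => T ⊆ b).card = lam

/-- A Steiner system `S(t, k, v)` with point set `{0, ..., v-1}`. -/
def IsSteiner (v t k : ℕ) (𝔅 : Finset (Finset ℕ)) : Prop :=
  IsDesign v t k 1 𝔅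

/-- `a_i(D)`: the number of `k`-subsets of `{0, ..., v-1}` that are not blocks and have
exactly `i` out-neighbors among the blocks in Welter's game `Γ_{v,k}`. -/
noncomputable def aCount (v k : ℕ) (𝔅 : Finset (Finset ℕ)) (i : ℕ) : ℕ :=
  Set.ncard {P | P ∈ welterVertex v k ∧ P ∉ 𝔅 ∧
    Set.ncard {b | b ∈ 𝔅 ∧ welterRel v k P b} = i}

open Finset
open scoped Classical

namespace Finset

theorem insert_erase_insert_erase {α : Type*} [DecidableEq α] {s : Finset α} {p q : α}
    (hp : p ∈ s) (hq : q ∉ s) : insert p ((insert q (s.erase p)).erase q) = s := by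
  rw [erase_insert fun h => hq (mem_of_mem_erase h), insert_erase hp]

theorem sdiff_insert_erase {α : Type*} [DecidableEq α] {s : Finset α} {p q : α}
    (hp : p ∉ s) (hq : q ∈ s) : s \ insert p (s.erase q) = {q} := by
  ext x
  simp only [mem_sdiff, mem_insert, mem_erase, mem_singleton]
  constructor
  · rintro ⟨hx, hxp⟩
    by_contra hxq
    exact hxp (Or.inr ⟨hxq, hx⟩)
  · rintro rfl
    exact ⟨hq, by rintro (rfl | ⟨_, _⟩) <;> contradiction⟩

theorem insert_erase_sdiff {α : Type*} [DecidableEq α] {s : Finset α} {p : α}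
    (hp : p ∉ s) (q : α) : insert p (s.erase q) \ s = {p} := by
  ext x
  simp only [mem_sdiff, mem_insert, mem_erase, mem_singleton]
  constructor
  · rintro ⟨rfl | ⟨_, hx⟩, hxs⟩
    · rfl
    · exact absurd hx hxs
  · rintro rfl
    exact ⟨Or.inl rfl, hp⟩

theorem card_insert_erase {α : Type*} [DecidableEq α] {s : Finset α} {p q : α}
    (hp : p ∉ s) (hq : q ∈ s) : #(insert p (s.erase q)) = #s := by
  rw [card_insert_of_notMem fun h => hp (mem_of_mem_erase h), card_erase_add_one hq]

theorem card_filter_fst_lt_snd_product_self {α : Type*} [LT α] [DecidableLT α]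
    (s : Finset α) : #{z ∈ s ×ˢ s | z.1 < z.2} = #{z ∈ s ×ˢ s | z.2 < z.1} :=
  card_equiv (Equiv.prodComm α α) (by simp [and_comm])

theorem card_filter_product_sdiff_add {α β : Type*} [DecidableEq β] {s b : Finset β}
    (hb : b ⊆ s) (a : Finset α) (r : α → β → Prop) [∀ x y, Decidable (r x y)] :
    #{z ∈ a ×ˢ (s \ b) | r z.1 z.2} + #{z ∈ a ×ˢ b | r z.1 z.2} = ∑ x ∈ a, #{y ∈ s | r x y} := by
  rw [← card_union_of_disjoint (disjoint_filter_filter (disjoint_product.mpr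
    (Or.inr sdiff_disjoint))), ← filter_union, ← product_union, sdiff_union_of_subset hb,
    card_filter, sum_product]
  simp only [card_filter]

end Finset

namespace IsDesign

variable {v t k lam : ℕ} {𝔅 : Finset (Finset ℕ)}

theorem card_filter_mem_mul_choose (h : IsDesign v t k lam 𝔅) (ht : 1 ≤ t) {x : ℕ}
    (hx : x ∈ range v) :
    #{b ∈ 𝔅 | x ∈ b} * (k - 1).choose (t - 1) = (v - 1).choose (t - 1) * lam := by
  have hT : #{T ∈ (range v).powersetCard t | {x} ⊆ T} = (v - 1).choose (t - 1) := by
    simpa using card_filter_powersetCard_subset {x} (range v) t (by simpa using hx) (by simpa)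
  rw [← hT]
  refine card_mul_eq_card_mul (fun b T => T ⊆ b) (fun b hb => ?_) (fun T hT => ?_)
  · obtain ⟨hb𝔅, hxb⟩ := mem_filter.mp hb
    obtain ⟨hbv, hbk⟩ := h.1 b hb𝔅
    have : bipartiteAbove (fun b T => T ⊆ b) {T ∈ (range v).powersetCard t | {x} ⊆ T} b
        = {T ∈ b.powersetCard t | {x} ⊆ T} := by
      ext T
      simp only [mem_bipartiteAbove, mem_filter, mem_powersetCard]
      exact ⟨fun ⟨⟨⟨_, hTt⟩, hxT⟩, hTb⟩ => ⟨⟨hTb, hTt⟩, hxT⟩,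
        fun ⟨⟨hTb, hTt⟩, hxT⟩ => ⟨⟨⟨hTb.trans hbv, hTt⟩, hxT⟩, hTb⟩⟩
    rw [this, card_filter_powersetCard_subset {x} b t (by simpa using hxb) (by simpa), hbk,
      card_singleton]
  · obtain ⟨hT, hxT⟩ := mem_filter.mp hT
    obtain ⟨hTv, hTt⟩ := mem_powersetCard.mp hT
    rw [← h.2 T hTv hTt]
    congr 1
    ext b
    simp only [mem_bipartiteBelow, mem_filter]
    exact ⟨fun ⟨⟨hb, _⟩, hTb⟩ => ⟨hb, hTb⟩,
      fun ⟨hb, hTb⟩ => ⟨⟨hb, hTb (singleton_subset_iff.mp hxT)⟩, hTb⟩⟩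

theorem sum_sum_mul_choose (h : IsDesign v t k lam 𝔅) (ht : 1 ≤ t) (g : ℕ → ℕ) :
    (∑ b ∈ 𝔅, ∑ x ∈ b, g x) * (k - 1).choose (t - 1)
      = (v - 1).choose (t - 1) * lam * ∑ x ∈ range v, g x := by
  have hsum : ∑ b ∈ 𝔅, ∑ x ∈ b, g x = ∑ x ∈ range v, #{b ∈ 𝔅 | x ∈ b} * g x := by
    rw [sum_comm' (t' := range v) (s' := fun x => {b ∈ 𝔅 | x ∈ b})]
    · simp only [sum_const, smul_eq_mul]
    · intro b x
      simp only [mem_filter]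
      exact ⟨fun ⟨hb, hx⟩ => ⟨⟨hb, hx⟩, (h.1 b hb).1 hx⟩, fun ⟨hbx, _⟩ => hbx⟩
  rw [hsum, sum_mul, mul_sum]
  refine sum_congr rfl fun x hx => ?_
  rw [mul_right_comm, card_filter_mem_mul_choose h ht hx]

theorem sum_sum_eq_of_sum_range_eq (h : IsDesign v t k lam 𝔅) (ht : 1 ≤ t) (htk : t ≤ k)
    {g g' : ℕ → ℕ} (hg : ∑ x ∈ range v, g x = ∑ x ∈ range v, g' x) :
    ∑ b ∈ 𝔅, ∑ x ∈ b, g x = ∑ b ∈ 𝔅, ∑ x ∈ b, g' x :=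
  Nat.eq_of_mul_eq_mul_right (Nat.choose_pos (n := k - 1) (k := t - 1) (by omega)) <| by
    rw [sum_sum_mul_choose h ht, sum_sum_mul_choose h ht, hg]

end IsDesign

theorem welterEdge_iff_exists_into {P b : Finset ℕ} :
    welterEdge P b ↔ ∃ q ∈ b, ∃ p, p ∉ b ∧ q < p ∧ P = insert p (b.erase q) := by
  constructor
  · rintro ⟨p, hp, q, hq, hqp, rfl⟩
    refine ⟨q, mem_insert_self q _, p, ?_, hqp, (insert_erase_insert_erase hp hq).symm⟩
    simp [hqp.ne']
  · rintro ⟨q, hq, p, hp, hqp, rfl⟩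
    refine ⟨p, mem_insert_self p _, q, ?_, hqp, (insert_erase_insert_erase hq hp).symm⟩
    simp [hqp.ne]

theorem welterEdge_insert_insert {s : Finset ℕ} {q₁ q₂ : ℕ} (h₁ : q₁ ∉ s) (h₂ : q₂ ∉ s)
    (hlt : q₂ < q₁) : welterEdge (insert q₁ s) (insert q₂ s) :=
  ⟨q₁, mem_insert_self q₁ s, q₂, by simp [hlt.ne, h₂], hlt, by rw [erase_insert h₁]⟩

theorem card_filter_welterRel_le_card {v k : ℕ} {𝔅 : Finset (Finset ℕ)}
    (hind : ∀ b₁ ∈ 𝔅, ∀ b₂ ∈ 𝔅, ¬ welterRel v k b₁ b₂) (P : Finset ℕ) :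
    #{b ∈ 𝔅 | welterRel v k P b} ≤ #P := by
  rw [← Nat.choose_one_right #P, ← card_powersetCard]
  refine card_le_card_of_injOn (P \ ·) (fun b hb => ?_) fun b₁ hb₁ b₂ hb₂ hsdiff => ?_
  · obtain ⟨-, -, p, hp, q, hq, -, rfl⟩ := (mem_filter.mp hb).2
    simp [sdiff_insert_erase hq hp, hp]
  · obtain ⟨hb₁, -, hv₁, p₁, hp₁, q₁, hq₁, -, rfl⟩ := mem_filter.mp hb₁
    obtain ⟨hb₂, -, hv₂, p₂, hp₂, q₂, hq₂, -, rfl⟩ := mem_filter.mp hb₂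
    simp only [sdiff_insert_erase hq₁ hp₁, sdiff_insert_erase hq₂ hp₂,
      singleton_inj] at hsdiff
    subst hsdiff
    have hq₁' : q₁ ∉ P.erase p₁ := fun h => hq₁ (mem_of_mem_erase h)
    have hq₂' : q₂ ∉ P.erase p₁ := fun h => hq₂ (mem_of_mem_erase h)
    rcases lt_trichotomy q₁ q₂ with hlt | rfl | hlt
    · exact absurd ⟨hv₂, hv₁, welterEdge_insert_insert hq₂' hq₁' hlt⟩ (hind _ hb₂ _ hb₁)
    · rfl
    · exact absurd ⟨hv₁, hv₂, welterEdge_insert_insert hq₁' hq₂' hlt⟩ (hind _ hb₁ _ hb₂)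

/-- A pair `(q, p)` here encodes the in-edge from `insert p (b.erase q)` to `b`. -/
def welterInPairs (v : ℕ) (b : Finset ℕ) : Finset (ℕ × ℕ) :=
  {z ∈ b ×ˢ (range v \ b) | z.1 < z.2}

/-- A pair `(p, q)` here encodes the out-edge from `b` to `insert q (b.erase p)`. -/
def welterOutPairs (v : ℕ) (b : Finset ℕ) : Finset (ℕ × ℕ) :=
  {z ∈ b ×ˢ (range v \ b) | z.2 < z.1}

theorem mem_welterInPairs {v : ℕ} {b : Finset ℕ} {q p : ℕ} :
    (q, p) ∈ welterInPairs v b ↔ q ∈ b ∧ p < v ∧ p ∉ b ∧ q < p := by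
  simp [welterInPairs, and_assoc]

theorem card_filter_welterRel_eq_card_welterInPairs {v k : ℕ} {b : Finset ℕ}
    (hb : b ∈ welterVertex v k) :
    #{P ∈ (range v).powersetCard k | welterRel v k P b} = #(welterInPairs v b) := by
  symm
  refine card_nbij (fun z => insert z.2 (b.erase z.1)) (fun ⟨q, p⟩ hz => ?_)
    (fun ⟨q₁, p₁⟩ hz₁ ⟨q₂, p₂⟩ hz₂ h => ?_) fun P hP => ?_
  · obtain ⟨hq, hpv, hp, hqp⟩ := mem_welterInPairs.mp hz
    have hP : insert p (b.erase q) ∈ welterVertex v k :=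
      ⟨insert_subset (mem_range.mpr hpv) ((erase_subset q b).trans hb.1),
        (card_insert_erase hp hq).trans hb.2⟩
    exact mem_filter.mpr ⟨mem_powersetCard.mpr hP,
      hP, hb, welterEdge_iff_exists_into.mpr ⟨q, hq, p, hp, hqp, rfl⟩⟩
  · obtain ⟨hq₁, -, hp₁, -⟩ := mem_welterInPairs.mp hz₁
    obtain ⟨hq₂, -, hp₂, -⟩ := mem_welterInPairs.mp hz₂
    have hp := congrArg (· \ b) h
    have hq := congrArg (b \ ·) h
    simp only [insert_erase_sdiff hp₁, insert_erase_sdiff hp₂, sdiff_insert_erase hp₁ hq₁,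
      sdiff_insert_erase hp₂ hq₂, singleton_inj] at hp hq
    rw [hp, hq]
  · obtain ⟨-, -, -, hedge⟩ := mem_filter.mp hP
    obtain ⟨q, hq, p, hp, hqp, rfl⟩ := welterEdge_iff_exists_into.mp hedge
    have hpv : p < v := mem_range.mp ((mem_powersetCard.mp (mem_filter.mp hP).1).1
      (mem_insert_self p _))
    exact ⟨(q, p), mem_welterInPairs.mpr ⟨hq, hpv, hp, hqp⟩, rfl⟩

theorem card_welterInPairs_add {v : ℕ} {b : Finset ℕ} (hb : b ⊆ range v) :
    #(welterInPairs v b) + #{z ∈ b ×ˢ b | z.1 < z.2} = ∑ x ∈ b, (v - 1 - x) := by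
  rw [welterInPairs, card_filter_product_sdiff_add hb b (· < ·)]
  refine sum_congr rfl fun x _ => ?_
  have : {y ∈ range v | x < y} = Ioo x v := by ext; simp [and_comm]
  rw [this, Nat.card_Ioo]
  omega

theorem card_welterOutPairs_add {v : ℕ} {b : Finset ℕ} (hb : b ⊆ range v) :
    #(welterOutPairs v b) + #{z ∈ b ×ˢ b | z.2 < z.1} = ∑ x ∈ b, x := by
  rw [welterOutPairs, card_filter_product_sdiff_add hb b (fun x y => y < x)]
  refine sum_congr rfl fun x hx => ?_
  have hxv := mem_range.mp (hb hx)
  have : {y ∈ range v | y < x} = range x := by ext; simp; omega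
  rw [this, card_range]

theorem card_welterInPairs_add_card_welterOutPairs {v : ℕ} {b : Finset ℕ} (hb : b ⊆ range v) :
    #(welterInPairs v b) + #(welterOutPairs v b) = #b * (v - #b) := by
  have hne : ∀ z ∈ b ×ˢ (range v \ b), ¬ z.1 < z.2 ↔ z.2 < z.1 := by
    simp only [mem_product, mem_sdiff]
    rintro ⟨x, y⟩ ⟨hx, -, hy⟩
    have : y ≠ x := by rintro rfl; exact hy hx
    exact not_lt.trans (Nat.le_iff_lt_or_eq.trans (or_iff_left this))
  rw [welterInPairs, welterOutPairs, ← filter_congr hne, card_filter_add_card_filter_not,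
    card_product, card_sdiff_of_subset hb, card_range]

theorem IsDesign.sum_card_welterInPairs_eq {v t k lam : ℕ} {𝔅 : Finset (Finset ℕ)}
    (h : IsDesign v t k lam 𝔅) (ht : 1 ≤ t) (htk : t ≤ k) :
    ∑ b ∈ 𝔅, #(welterInPairs v b) = ∑ b ∈ 𝔅, #(welterOutPairs v b) := by
  have hsum := h.sum_sum_eq_of_sum_range_eq ht htk (sum_range_reflect id v)
  simp only [id] at hsum
  rw [← sum_congr rfl fun b hb => card_welterInPairs_add (h.1 b hb).1,
    ← sum_congr rfl fun b hb => card_welterOutPairs_add (h.1 b hb).1, sum_add_distrib,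
    sum_add_distrib, sum_congr rfl fun b _ => card_filter_fst_lt_snd_product_self b] at hsum
  exact Nat.add_right_cancel hsum

theorem aCount_eq_card (v k : ℕ) (𝔅 : Finset (Finset ℕ)) (i : ℕ) :
    aCount v k 𝔅 i
      = #{P ∈ (range v).powersetCard k | P ∉ 𝔅 ∧ #{b ∈ 𝔅 | welterRel v k P b} = i} := by
  rw [aCount, ← Set.ncard_coe_finset]
  congr 1
  ext P
  simp [welterVertex, ← Set.ncard_coe_finset]

theorem sum_mul_aCount_eq {v k : ℕ} {𝔅 : Finset (Finset ℕ)}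
    (hind : ∀ b₁ ∈ 𝔅, ∀ b₂ ∈ 𝔅, ¬ welterRel v k b₁ b₂) :
    ∑ i ∈ range (k + 1), i * aCount v k 𝔅 i
      = ∑ P ∈ (range v).powersetCard k, #{b ∈ 𝔅 | welterRel v k P b} := by
  set f := fun P => #{b ∈ 𝔅 | welterRel v k P b}
  have hblock : ∀ P ∈ 𝔅, f P = 0 := fun P hP =>
    card_eq_zero.mpr (filter_eq_empty_iff.mpr (hind P hP))
  have hmaps : ∀ P ∈ {P ∈ (range v).powersetCard k | P ∉ 𝔅}, f P ∈ range (k + 1) := fun P hP =>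
    mem_range_succ_iff.mpr <| (card_filter_welterRel_le_card hind P).trans_eq
      (mem_powersetCard.mp (mem_filter.mp hP).1).2
  rw [← sum_filter_of_ne (p := (· ∉ 𝔅)) fun P _ hP hP𝔅 => hP (hblock P hP𝔅),
    ← sum_fiberwise_of_maps_to hmaps]
  refine sum_congr rfl fun i _ => ?_
  rw [aCount_eq_card, filter_filter, sum_const_nat fun P hP => (mem_filter.mp hP).2.2, mul_comm]

theorem sum_card_filter_welterRel_eq {v k : ℕ} {𝔅 : Finset (Finset ℕ)}
    (h𝔅 : ∀ b ∈ 𝔅, b ∈ welterVertex v k) :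
    ∑ P ∈ (range v).powersetCard k, #{b ∈ 𝔅 | welterRel v k P b}
      = ∑ b ∈ 𝔅, #(welterInPairs v b) := by
  rw [← sum_congr rfl fun b hb => card_filter_welterRel_eq_card_welterInPairs (h𝔅 b hb)]
  exact sum_card_bipartiteAbove_eq_sum_card_bipartiteBelow _

theorem stmt_9_general (v t k lam : ℕ) (𝔅 : Finset (Finset ℕ))
    (h : IsDesign v t k lam 𝔅) (ht : 1 ≤ t) (htk : t ≤ k)
    (hind : ∀ b₁ ∈ 𝔅, ∀ b₂ ∈ 𝔅, ¬ welterRel v k b₁ b₂) :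
    2 * ∑ i ∈ Finset.range (k + 1), i * aCount v k 𝔅 i = 𝔅.card * k * (v - k) := by
  have hdeg : ∀ b ∈ 𝔅, #(welterInPairs v b) + #(welterOutPairs v b) = k * (v - k) := fun b hb => by
    rw [card_welterInPairs_add_card_welterOutPairs (h.1 b hb).1, (h.1 b hb).2]
  rw [sum_mul_aCount_eq hind, sum_card_filter_welterRel_eq h.1, two_mul]
  nth_rw 2 [h.sum_card_welterInPairs_eq ht htk]
  rw [← sum_add_distrib, sum_congr rfl hdeg, sum_const, smul_eq_mul, mul_assoc]

/-- For a `t`-`(v, k, λ)` design with `t ≥ 1` whose block set is an independent set in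
Welter's game `Γ_{v,k}`, `Σ_{i=0}^{k} i · a_i(D) = λ₀ k (v - k) / 2`, where
`λ₀ = 𝔅.card` is the number of blocks (stated multiplied through by 2). -/
theorem stmt_9 (v t k lam : ℕ) (𝔅 : Finset (Finset ℕ))
    (h : IsDesign v t k lam 𝔅) (ht : 1 ≤ t) (htk : t ≤ k) (hkv : k ≤ v)
    (hind : ∀ b₁ ∈ 𝔅, ∀ b₂ ∈ 𝔅, ¬ welterRel v k b₁ b₂) :
    2 * ∑ i ∈ Finset.range (k + 1), i * aCount v k 𝔅 i = 𝔅.card * k * (v - k) :=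
  stmt_9_general v t k lam 𝔅 h ht htk hind
end

section
/- Let D be a Steiner system S(t, t+1, v) with block set B, and let P be a (t+1)-subset of [v] that is not a block. Then |N⁺(P) ∩ B| + |N⁻(P) ∩ B| = t+1, where N⁺ and N⁻ denote out- and in-neighborhoods in Welter's game Γ_{v,t+1}. -/
/-- Uniqueness of the extra element in a decomposition `insert q E`. -/
lemma insert_ext {q q' : ℕ} {E : Finset ℕ} (hq : q ∉ E) (hq' : q' ∉ E)
    (h : insert q E = insert q' E) : q = q' := by
  have : q ∈ insert q' E := h ▸ Finset.mem_insert_self q E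
  rcases Finset.mem_insert.mp this with h1 | h1
  · exact h1
  · exact absurd h1 hq

/-- For a Steiner system `S(t, t+1, v)` with block set `𝔅` and a `(t+1)`-subset `P` of
`{0, ..., v-1}` that is not a block, `|N⁺(P) ∩ 𝔅| + |N⁻(P) ∩ 𝔅| = t + 1` in Welter's
game `Γ_{v,t+1}`. -/
theorem stmt_10 (v t : ℕ) (𝔅 : Finset (Finset ℕ))
    (h : IsSteiner v t (t + 1) 𝔅)
    (P : Finset ℕ) (hP : P ∈ welterVertex v (t + 1)) (hPB : P ∉ 𝔅) :
    Set.ncard {b | b ∈ 𝔅 ∧ welterRel v (t + 1) P b}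
      + Set.ncard {b | b ∈ 𝔅 ∧ welterRel v (t + 1) b P} = t + 1 := by
  classical
  obtain ⟨hsub, hcard⟩ := hP
  obtain ⟨hB, hdes⟩ := h
  -- every t-subset of P obtained by erasing a point lies in a unique block
  have key : ∀ p ∈ P, ∃! b, b ∈ 𝔅 ∧ P.erase p ⊆ b := by
    intro p hp
    have hT : P.erase p ⊆ Finset.range v := (Finset.erase_subset _ _).trans hsub
    have hTc : (P.erase p).card = t := by
      rw [Finset.card_erase_of_mem hp, hcard]; omega
    have h1 := hdes _ hT hTc
    rw [Finset.card_eq_one] at h1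
    obtain ⟨a, ha⟩ := h1
    refine ⟨a, ?_, ?_⟩
    · have : a ∈ Finset.filter (fun b => P.erase p ⊆ b) 𝔅 := by
        rw [ha]; exact Finset.mem_singleton_self a
      exact Finset.mem_filter.mp this
    · intro b hb
      have : b ∈ Finset.filter (fun b => P.erase p ⊆ b) 𝔅 := Finset.mem_filter.mpr hb
      rw [ha, Finset.mem_singleton] at this; exact this
  set F : ℕ → Finset ℕ := fun p => if hp : p ∈ P then (key p hp).choose else ∅ with hF
  have hFmem : ∀ p ∈ P, F p ∈ 𝔅 ∧ P.erase p ⊆ F p := by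
    intro p hp; simp only [hF, dif_pos hp]; exact (key p hp).choose_spec.1
  have hFuniq : ∀ p ∈ P, ∀ b, b ∈ 𝔅 → P.erase p ⊆ b → b = F p := by
    intro p hp b hb1 hb2
    simp only [hF, dif_pos hp]
    exact (key p hp).choose_spec.2 b ⟨hb1, hb2⟩
  have hFne : ∀ p ∈ P, F p ≠ P := fun p hp he => hPB (he ▸ (hFmem p hp).1)
  -- structure of F p
  have hstruct : ∀ p ∈ P, ∃ q, q ∉ P ∧ q ≠ p ∧ F p = insert q (P.erase p) := by
    intro p hp
    obtain ⟨hb, hsb⟩ := hFmem p hp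
    have hbc : (F p).card = t + 1 := (hB _ hb).2
    have hEc : (P.erase p).card = t := by rw [Finset.card_erase_of_mem hp, hcard]; omega
    have h1 : ((F p) \ (P.erase p)).card = 1 := by
      rw [Finset.card_sdiff_of_subset hsb, hbc, hEc]; omega
    obtain ⟨q, hq⟩ := Finset.card_eq_one.mp h1
    have hqmem : q ∈ F p \ P.erase p := hq ▸ Finset.mem_singleton_self q
    have hqb : q ∈ F p := (Finset.mem_sdiff.mp hqmem).1
    have hqE : q ∉ P.erase p := (Finset.mem_sdiff.mp hqmem).2
    have hbeq : F p = insert q (P.erase p) := by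
      refine (Finset.eq_of_subset_of_card_le ?_ ?_).symm
      · exact Finset.insert_subset hqb hsb
      · rw [Finset.card_insert_of_notMem hqE, hbc, hEc]
    have hqp : q ≠ p := by
      intro hqp
      apply hFne p hp
      rw [hbeq, hqp, Finset.insert_erase hp]
    have hqP : q ∉ P := by
      intro hqP
      exact hqE (Finset.mem_erase.mpr ⟨hqp, hqP⟩)
    exact ⟨q, hqP, hqp, hbeq⟩
  -- injectivity of F on P
  have hFinj : ∀ p ∈ P, ∀ p' ∈ P, F p = F p' → p = p' := by
    intro p hp p' hp' he
    by_contra hne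
    have h1 : p ∈ F p' := (hFmem p' hp').2 (Finset.mem_erase.mpr ⟨hne, hp⟩)
    rw [← he] at h1
    obtain ⟨q, hq1, hq2, hq3⟩ := hstruct p hp
    rw [hq3, Finset.mem_insert] at h1
    rcases h1 with h1 | h1
    · exact hq1 (h1 ▸ hp)
    · exact (Finset.notMem_erase p P) h1
  -- any decomposition of F p determines p
  have hdet : ∀ p ∈ P, ∀ p₁ ∈ P, ∀ q₁, q₁ ∉ P → F p = insert q₁ (P.erase p₁) → p₁ = p := by
    intro p hp p₁ hp₁ q₁ hq₁ he
    have hsb : P.erase p₁ ⊆ F p := by rw [he]; exact Finset.subset_insert _ _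
    have := hFuniq p₁ hp₁ (F p) (hFmem p hp).1 hsb
    exact hFinj p₁ hp₁ p hp this.symm
  -- each p gives an edge in exactly one direction
  have hone : ∀ p ∈ P, welterEdge P (F p) ∨ welterEdge (F p) P := by
    intro p hp
    obtain ⟨q, hqP, hqp, heq⟩ := hstruct p hp
    have hqE : q ∉ P.erase p := fun hc => hqP (Finset.mem_of_mem_erase hc)
    rcases lt_or_gt_of_ne hqp with hlt | hlt
    · exact Or.inl ⟨p, hp, q, hqP, hlt, heq⟩
    · refine Or.inr ⟨q, ?_, p, ?_, hlt, ?_⟩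
      · rw [heq]; exact Finset.mem_insert_self q _
      · rw [heq, Finset.mem_insert]
        push_neg
        exact ⟨fun hc => hqp hc.symm, Finset.notMem_erase p P⟩
      · rw [heq, Finset.erase_insert hqE, Finset.insert_erase hp]
  have hnotboth : ∀ p ∈ P, ¬(welterEdge P (F p) ∧ welterEdge (F p) P) := by
    rintro p hp ⟨⟨p₁, hp₁, q₁, hq₁, hlt₁, he₁⟩, ⟨p₂, hp₂, q₂, hq₂, hlt₂, he₂⟩⟩
    -- from the first edge: p₁ = p
    have hpp₁ : p₁ = p := hdet p hp p₁ hp₁ q₁ hq₁ he₁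
    subst hpp₁
    -- from the second edge: convert to a decomposition of F p₁
    have hq₂P : q₂ ∈ P := by rw [he₂]; exact Finset.mem_insert_self q₂ _
    have hp₂P : p₂ ∉ P := by
      intro hc
      rw [he₂, Finset.mem_insert] at hc
      rcases hc with hc | hc
      · exact hq₂ (hc ▸ hp₂)
      · exact (Finset.notMem_erase p₂ (F p₁)) hc
    have hq₂E : q₂ ∉ (F p₁).erase p₂ := fun hc => hq₂ (Finset.mem_of_mem_erase hc)
    have hErase : P.erase q₂ = (F p₁).erase p₂ := by
      rw [he₂, Finset.erase_insert hq₂E]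
    have he₂' : F p₁ = insert p₂ (P.erase q₂) := by
      rw [hErase, Finset.insert_erase hp₂]
    have hq₂p : q₂ = p₁ := hdet p₁ hp q₂ hq₂P p₂ hp₂P he₂'
    subst hq₂p
    -- compare the two decompositions
    have hq₁E : q₁ ∉ P.erase q₂ := fun hc => hq₁ (Finset.mem_of_mem_erase hc)
    have hp₂E : p₂ ∉ P.erase q₂ := fun hc => hp₂P (Finset.mem_of_mem_erase hc)
    have : q₁ = p₂ := insert_ext hq₁E hp₂E (he₁ ▸ he₂')
    omega
  -- vertex membership of blocks
  have hBV : ∀ b ∈ 𝔅, b ∈ welterVertex v (t + 1) := fun b hb => hB b hb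
  have hPV : P ∈ welterVertex v (t + 1) := ⟨hsub, hcard⟩
  -- convert the two sets to finsets
  have hout : {b | b ∈ 𝔅 ∧ welterRel v (t + 1) P b}
      = ↑(𝔅.filter fun b => welterRel v (t + 1) P b) := by
    ext b; simp [Finset.mem_filter]
  have hin : {b | b ∈ 𝔅 ∧ welterRel v (t + 1) b P}
      = ↑(𝔅.filter fun b => welterRel v (t + 1) b P) := by
    ext b; simp [Finset.mem_filter]
  rw [hout, hin, Set.ncard_coe_finset, Set.ncard_coe_finset]
  -- identify the filters as images under F
  have houtF : 𝔅.filter (fun b => welterRel v (t + 1) P b)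
      = (P.filter fun p => welterEdge P (F p)).image F := by
    ext b
    simp only [Finset.mem_filter, Finset.mem_image]
    constructor
    · rintro ⟨hb, -, -, p, hp, q, hq, hlt, heq⟩
      have hsb : P.erase p ⊆ b := by rw [heq]; exact Finset.subset_insert _ _
      have hbF : b = F p := hFuniq p hp b hb hsb
      exact ⟨p, ⟨hp, hbF ▸ ⟨p, hp, q, hq, hlt, heq⟩⟩, hbF.symm⟩
    · rintro ⟨p, ⟨hp, hedge⟩, rfl⟩
      exact ⟨(hFmem p hp).1, hPV, hBV _ (hFmem p hp).1, hedge⟩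
  have hinF : 𝔅.filter (fun b => welterRel v (t + 1) b P)
      = (P.filter fun p => welterEdge (F p) P).image F := by
    ext b
    simp only [Finset.mem_filter, Finset.mem_image]
    constructor
    · rintro ⟨hb, -, -, p₂, hp₂, q₂, hq₂, hlt, heq⟩
      -- P = insert q₂ (b.erase p₂); so q₂ ∈ P and P.erase q₂ ⊆ b
      have hq₂P : q₂ ∈ P := by rw [heq]; exact Finset.mem_insert_self q₂ _
      have hq₂E : q₂ ∉ b.erase p₂ := fun hc => hq₂ (Finset.mem_of_mem_erase hc)
      have hErase : P.erase q₂ = b.erase p₂ := by rw [heq, Finset.erase_insert hq₂E]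
      have hsb : P.erase q₂ ⊆ b := hErase ▸ Finset.erase_subset _ _
      have hbF : b = F q₂ := hFuniq q₂ hq₂P b hb hsb
      exact ⟨q₂, ⟨hq₂P, hbF ▸ ⟨p₂, hp₂, q₂, hq₂, hlt, heq⟩⟩, hbF.symm⟩
    · rintro ⟨p, ⟨hp, hedge⟩, rfl⟩
      exact ⟨(hFmem p hp).1, hBV _ (hFmem p hp).1, hPV, hedge⟩
  rw [houtF, hinF]
  -- image cards via injectivity
  have hinj1 : Set.InjOn F ↑(P.filter fun p => welterEdge P (F p)) := by
    intro a ha b hb hab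
    simp only [Finset.coe_filter, Set.mem_setOf_eq] at ha hb
    exact hFinj a ha.1 b hb.1 hab
  have hinj2 : Set.InjOn F ↑(P.filter fun p => welterEdge (F p) P) := by
    intro a ha b hb hab
    simp only [Finset.coe_filter, Set.mem_setOf_eq] at ha hb
    exact hFinj a ha.1 b hb.1 hab
  rw [Finset.card_image_of_injOn hinj1, Finset.card_image_of_injOn hinj2]
  -- the two filters partition P
  have hfilter : (P.filter fun p => welterEdge (F p) P)
      = P.filter fun p => ¬ welterEdge P (F p) := by
    ext p
    simp only [Finset.mem_filter]
    constructor
    · rintro ⟨hp, he⟩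
      exact ⟨hp, fun he' => hnotboth p hp ⟨he', he⟩⟩
    · rintro ⟨hp, he⟩
      rcases hone p hp with h1 | h1
      · exact absurd h1 he
      · exact ⟨hp, h1⟩
  rw [hfilter, Finset.card_filter_add_card_filter_not, hcard]
end

section
/- Let D be a Steiner system S(t, t+1, v) with block set B, and let π be the permutation of [v] sending i to v−1−i. Then for each 0 ≤ i ≤ t+1, a_i(D) = a_{t+1−i}(D^π), where D^π is the design with block set {B^π : B ∈ B} and a_i counts non-blocks with exactly i out-blocks in Welter's game Γ_{v,t+1}. -/
namespace WH
open Finset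
attribute [local instance] Classical.propDecidable

/-! ### The reversal map `φ` -/

/-- the reversal map -/
def φ (v : ℕ) (S : Finset ℕ) : Finset ℕ := S.image fun a => v - 1 - a

lemma φ_subset {v : ℕ} (hv : 0 < v) (S : Finset ℕ) : φ v S ⊆ range v := by
  intro x hx
  simp only [φ, mem_image] at hx
  obtain ⟨a, _, rfl⟩ := hx
  simp only [mem_range]; omega

lemma φ_card {v : ℕ} {S : Finset ℕ} (hS : S ⊆ range v) : (φ v S).card = S.card := by
  apply Finset.card_image_of_injOn
  intro a ha b hb hab
  have := hS ha; have := hS hb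
  simp only [mem_range] at *; omega

lemma φ_φ {v : ℕ} {S : Finset ℕ} (hS : S ⊆ range v) : φ v (φ v S) = S := by
  simp only [φ, image_image]
  rw [show S = S.image id from (image_id).symm]
  rw [image_image]
  apply image_congr
  intro a ha
  have := hS ha
  simp only [mem_range] at this
  simp only [Function.comp, id]; omega

lemma φ_insert {v q : ℕ} (S : Finset ℕ) :
    φ v (insert q S) = insert (v - 1 - q) (φ v S) := by
  simp [φ, image_insert]

lemma φ_erase {v q : ℕ} {S : Finset ℕ} (hS : S ⊆ range v) (hq : q < v) :
    φ v (S.erase q) = (φ v S).erase (v - 1 - q) := by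
  ext x
  simp only [φ, mem_image, mem_erase]
  constructor
  · rintro ⟨a, ⟨ha1, ha2⟩, rfl⟩
    have := hS ha2
    simp only [mem_range] at this
    exact ⟨by omega, a, ha2, rfl⟩
  · rintro ⟨hx, a, ha, rfl⟩
    have := hS ha
    simp only [mem_range] at this
    exact ⟨a, ⟨by omega, ha⟩, rfl⟩

/-- the reversal map reverses Welter edges -/
lemma edge_rev {v : ℕ} {P Q : Finset ℕ} (hP : P ⊆ range v) (h : welterEdge P Q) :
    welterEdge (φ v Q) (φ v P) := by
  obtain ⟨p, hp, q, hqP, hqp, rfl⟩ := h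
  have hpv : p < v := by have := hP hp; simpa [mem_range] using this
  have hqv : q < v := lt_trans hqp hpv
  have hQsub : insert q (P.erase p) ⊆ range v := by
    intro x hx
    rcases mem_insert.mp hx with rfl | hx
    · simp [mem_range]; omega
    · exact hP (mem_of_mem_erase hx)
  refine ⟨v - 1 - q, ?_, v - 1 - p, ?_, by omega, ?_⟩
  · exact mem_image_of_mem _ (mem_insert_self q _)
  · intro hmem
    simp only [φ, mem_image] at hmem
    obtain ⟨a, ha, hav⟩ := hmem
    have : a < v := by have := hQsub ha; simpa [mem_range] using this
    have : a = p := by omega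
    subst this
    rcases mem_insert.mp ha with h1 | h1
    · omega
    · exact absurd rfl (mem_erase.mp h1).1
  · have h1 : (insert q (P.erase p)).erase q = P.erase p :=
      erase_insert (by simp [mem_erase]; intro _; exact hqP)
    rw [← φ_erase hQsub hqv, h1, ← φ_insert, insert_erase hp]

/-! ### The core counting lemma -/

/-- anatomy of a Welter edge: the two sets differ by a single swap -/
lemma edge_sdiff {P Q : Finset ℕ} (h : welterEdge P Q) :
    ∃ p q, p ∈ P ∧ q ∉ P ∧ q < p ∧ P \ Q = {p} ∧ Q \ P = {q} := by
  obtain ⟨p, hp, q, hqP, hqp, rfl⟩ := h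
  refine ⟨p, q, hp, hqP, hqp, ?_, ?_⟩
  · ext x
    simp only [mem_sdiff, mem_insert, mem_erase, mem_singleton]
    constructor
    · rintro ⟨hxP, hx⟩
      by_contra hxp
      exact hx (Or.inr ⟨hxp, hxP⟩)
    · rintro rfl
      exact ⟨hp, by rintro (rfl | ⟨h1, _⟩) <;> [omega; exact h1 rfl]⟩
  · ext x
    simp only [mem_sdiff, mem_insert, mem_erase, mem_singleton]
    constructor
    · rintro ⟨rfl | ⟨_, hxP⟩, hx⟩
      · rfl
      · exact absurd hxP hx
    · rintro rfl
      exact ⟨Or.inl rfl, hqP⟩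

/-- Core counting lemma: for a non-block vertex `P` of a Steiner system `S(t,t+1,v)`,
the number of out-neighbor blocks plus the number of in-neighbor blocks is `t+1`. -/
lemma out_add_in (v t : ℕ) (𝔅 : Finset (Finset ℕ)) (hS : IsSteiner v t (t + 1) 𝔅)
    (P : Finset ℕ) (hPr : P ⊆ range v) (hPc : P.card = t + 1) (hPB : P ∉ 𝔅) :
    (𝔅.filter fun b => welterEdge P b).card
      + (𝔅.filter fun b => welterEdge b P).card = t + 1 := by
  classical
  obtain ⟨hblocks, hcover⟩ := hS
  -- for each p ∈ P there is a unique block containing P.erase p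
  have huniq : ∀ p ∈ P, ∃! b, b ∈ 𝔅 ∧ P.erase p ⊆ b := by
    intro p hp
    have hsub : P.erase p ⊆ range v := (erase_subset p P).trans hPr
    have hcard : (P.erase p).card = t := by rw [card_erase_of_mem hp, hPc]; omega
    have h1 := hcover (P.erase p) hsub hcard
    rw [Finset.card_eq_one] at h1
    obtain ⟨b, hb⟩ := h1
    refine ⟨b, ?_, ?_⟩
    · have : b ∈ 𝔅.filter fun b => P.erase p ⊆ b := hb ▸ mem_singleton_self b
      simpa using this
    · intro c hc
      have : c ∈ 𝔅.filter fun b => P.erase p ⊆ b := by simpa using hc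
      rw [hb] at this; simpa using this
  have hdisj : Disjoint (𝔅.filter fun b => welterEdge P b) (𝔅.filter fun b => welterEdge b P) := by
    rw [Finset.disjoint_left]
    intro b hb1 hb2
    simp only [mem_filter] at hb1 hb2
    obtain ⟨p, q, hp, hq, hqp, hPQ, hQP⟩ := edge_sdiff hb1.2
    obtain ⟨p', q', hp', hq', hqp', hPQ', hQP'⟩ := edge_sdiff hb2.2
    have e1 : q = p' := Finset.singleton_injective (hQP.symm.trans hPQ')
    have e2 : p = q' := Finset.singleton_injective (hPQ.symm.trans hQP')
    omega
  rw [← Finset.card_union_of_disjoint hdisj, ← hPc]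
  symm
  -- bijection p ↦ unique block ⊇ P.erase p
  apply Finset.card_bij (fun p hp => Finset.choose _ 𝔅 (by
    have := huniq p hp
    simpa [and_assoc] using this))
  · -- maps into union
    intro p hp
    set b := Finset.choose (fun b => P.erase p ⊆ b) 𝔅 _ with hbdef
    have hbB : b ∈ 𝔅 := Finset.choose_mem _ _ _
    have hbsub : P.erase p ⊆ b := Finset.choose_property _ _ _
    have hbcard : b.card = t + 1 := (hblocks b hbB).2
    have hbne : b ≠ P := fun e => hPB (e ▸ hbB)
    have hpb : p ∉ b := by
      intro hpbmem
      have hPb : P ⊆ b := by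
        intro x hx
        by_cases hxp : x = p
        · exact hxp ▸ hpbmem
        · exact hbsub (mem_erase.mpr ⟨hxp, hx⟩)
      exact hbne (Finset.eq_of_subset_of_card_le hPb (le_of_eq (by rw [hbcard, hPc]))).symm
    have hinter : b ∩ P = P.erase p := by
      apply Finset.Subset.antisymm
      · intro x hx
        rw [mem_inter] at hx
        rcases eq_or_ne x p with rfl | hxp
        · exact absurd hx.1 hpb
        · exact mem_erase.mpr ⟨hxp, hx.2⟩
      · intro x hx
        exact mem_inter.mpr ⟨hbsub hx, mem_of_mem_erase hx⟩
    have hcard1 : (b \ P).card = 1 := by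
      have := Finset.card_inter_add_card_sdiff b P
      rw [hinter, card_erase_of_mem hp, hPc] at this
      omega
    rw [Finset.card_eq_one] at hcard1
    obtain ⟨q, hq⟩ := hcard1
    have hqb : q ∈ b := (mem_sdiff.mp (hq ▸ mem_singleton_self q)).1
    have hqP : q ∉ P := (mem_sdiff.mp (hq ▸ mem_singleton_self q)).2
    have hbeq : b = insert q (P.erase p) := by
      ext x
      simp only [mem_insert]
      constructor
      · intro hx
        by_cases hxP : x ∈ P
        · exact Or.inr (hinter ▸ mem_inter.mpr ⟨hx, hxP⟩)
        · have hxs : x ∈ b \ P := mem_sdiff.mpr ⟨hx, hxP⟩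
          rw [hq, mem_singleton] at hxs
          exact Or.inl hxs
      · rintro (rfl | hx)
        · exact hqb
        · exact hbsub hx
    have hqnep : q ≠ p := fun e => hqP (e ▸ hp)
    rw [mem_union, mem_filter, mem_filter]
    rcases lt_or_gt_of_ne hqnep with hlt | hgt
    · exact Or.inl ⟨hbB, p, hp, q, hqP, hlt, hbeq⟩
    · refine Or.inr ⟨hbB, q, hqb, p, hpb, hgt, ?_⟩
      rw [hbeq, erase_insert (by simp [mem_erase]; intro _; exact hqP),
        insert_erase hp]
  · -- injectivity
    intro p hp p' hp' heq
    by_contra hne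
    set b := Finset.choose (fun b => P.erase p ⊆ b) 𝔅 _ with hbdef
    have hbB : b ∈ 𝔅 := Finset.choose_mem _ _ _
    have h1 : P.erase p ⊆ b := Finset.choose_property _ _ _
    have h2 : P.erase p' ⊆ b := heq ▸ Finset.choose_property _ _ _
    have hPb : P ⊆ b := by
      intro x hx
      by_cases hxp : x = p
      · exact h2 (mem_erase.mpr ⟨by rw [hxp]; exact hne, hx⟩)
      · exact h1 (mem_erase.mpr ⟨hxp, hx⟩)
    have : b = P := Finset.eq_of_subset_of_card_le hPb
      (le_of_eq (by rw [hPc, (hblocks b hbB).2])) |>.symm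
    exact hPB (this ▸ hbB)
  · -- surjectivity
    intro b hb
    rw [mem_union, mem_filter, mem_filter] at hb
    rcases hb with ⟨hbB, p, hp, q, hqP, hqp, hbeq⟩ | ⟨hbB, p, hpb, q, hqb, hqp, hPeq⟩
    · refine ⟨p, hp, ?_⟩
      have hu := huniq p hp
      have hchoose := Finset.choose_property (fun b => P.erase p ⊆ b) 𝔅
        (by simpa [and_assoc] using hu)
      have hcm := Finset.choose_mem (fun b => P.erase p ⊆ b) 𝔅
        (by simpa [and_assoc] using hu)
      exact (hu.unique ⟨hcm, hchoose⟩ ⟨hbB, by rw [hbeq]; exact subset_insert _ _⟩)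
    · have hqP : q ∈ P := hPeq ▸ mem_insert_self q _
      refine ⟨q, hqP, ?_⟩
      have hu := huniq q hqP
      have hchoose := Finset.choose_property (fun c => P.erase q ⊆ c) 𝔅
        (by simpa [and_assoc] using hu)
      have hcm := Finset.choose_mem (fun c => P.erase q ⊆ c) 𝔅
        (by simpa [and_assoc] using hu)
      have hPerase : P.erase q ⊆ b := by
        rw [hPeq, erase_insert (by simp [mem_erase]; intro _; exact hqb)]
        exact erase_subset _ _
      exact (hu.unique ⟨hcm, hchoose⟩ ⟨hbB, hPerase⟩)

/-! ### Reducing `welterRel` counts to `welterEdge` counts -/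

lemma count_out {v k : ℕ} {𝔅 : Finset (Finset ℕ)}
    (hbl : ∀ b ∈ 𝔅, b ⊆ range v ∧ b.card = k) {P : Finset ℕ} (hP : P ∈ welterVertex v k) :
    Set.ncard {b | b ∈ 𝔅 ∧ welterRel v k P b}
      = (𝔅.filter fun b => welterEdge P b).card := by
  rw [← Set.ncard_coe_finset]
  congr 1
  ext b
  simp only [Finset.coe_filter, Set.mem_setOf_eq]
  constructor
  · rintro ⟨hb, _, _, he⟩; exact ⟨hb, he⟩
  · rintro ⟨hb, he⟩; exact ⟨hb, hP, hbl b hb, he⟩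

lemma count_in {v k : ℕ} {𝔅 : Finset (Finset ℕ)}
    (hbl : ∀ b ∈ 𝔅, b ⊆ range v ∧ b.card = k) {P : Finset ℕ} (hP : P ∈ welterVertex v k) :
    Set.ncard {b | b ∈ 𝔅 ∧ welterRel v k b P}
      = (𝔅.filter fun b => welterEdge b P).card := by
  rw [← Set.ncard_coe_finset]
  congr 1
  ext b
  simp only [Finset.coe_filter, Set.mem_setOf_eq]
  constructor
  · rintro ⟨hb, _, _, he⟩; exact ⟨hb, he⟩
  · rintro ⟨hb, he⟩; exact ⟨hb, hbl b hb, hP, he⟩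

/-- the out-neighbor blocks of `φ P` in the reflected design are the images of the
in-neighbor blocks of `P`. -/
lemma out_eq_image_in {v k : ℕ} {𝔅 : Finset (Finset ℕ)}
    (hbl : ∀ b ∈ 𝔅, b ⊆ range v ∧ b.card = k) {P : Finset ℕ} (hP : P ∈ welterVertex v k)
    (hv : 0 < v) :
    {b | b ∈ 𝔅.image (φ v) ∧ welterRel v k (φ v P) b}
      = (φ v) '' {b | b ∈ 𝔅 ∧ welterRel v k b P} := by
  obtain ⟨hPr, hPc⟩ := hP
  ext b'
  simp only [Set.mem_setOf_eq, Set.mem_image, Finset.mem_image]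
  constructor
  · rintro ⟨⟨b, hbB, rfl⟩, _, _, he⟩
    have hbr := (hbl b hbB).1
    have he' := edge_rev (φ_subset hv P) he
    rw [φ_φ hbr, φ_φ hPr] at he'
    exact ⟨b, ⟨hbB, ⟨hbr, (hbl b hbB).2⟩, ⟨hPr, hPc⟩, he'⟩, rfl⟩
  · rintro ⟨b, ⟨hbB, _, _, he⟩, rfl⟩
    have hbr := (hbl b hbB).1
    refine ⟨⟨b, hbB, rfl⟩, ⟨φ_subset hv P, by rw [φ_card hPr, hPc]⟩,
      ⟨φ_subset hv b, by rw [φ_card hbr, (hbl b hbB).2]⟩, edge_rev hbr he⟩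

end WH

/-- For a Steiner system `S(t, t+1, v)` and the permutation `π : i ↦ v - 1 - i` of
`{0, ..., v-1}`, we have `a_i(D) = a_{t+1-i}(D^π)` for `0 ≤ i ≤ t + 1`. -/
theorem stmt_11 (v t : ℕ) (𝔅 : Finset (Finset ℕ))
    (h : IsSteiner v t (t + 1) 𝔅) (i : ℕ) (hi : i ≤ t + 1) :
    aCount v (t + 1) 𝔅 i
      = aCount v (t + 1) (𝔅.image fun B => B.image fun a => v - 1 - a) (t + 1 - i) := by
  classical
  open WH Finset in
  have h𝔅' : (𝔅.image fun B => B.image fun a => v - 1 - a) = 𝔅.image (φ v) := rfl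
  rw [h𝔅']
  unfold aCount
  set k := t + 1 with hk
  have hbl : ∀ b ∈ 𝔅, b ⊆ range v ∧ b.card = k := h.1
  set A : Set (Finset ℕ) := {P | P ∈ welterVertex v k ∧ P ∉ 𝔅 ∧
    Set.ncard {b | b ∈ 𝔅 ∧ welterRel v k P b} = i} with hA
  set A' : Set (Finset ℕ) := {P | P ∈ welterVertex v k ∧ P ∉ 𝔅.image (φ v) ∧
    Set.ncard {b | b ∈ 𝔅.image (φ v) ∧ welterRel v k P b} = t + 1 - i} with hA'
  -- v is positive whenever a vertex exists
  have hvpos : ∀ P : Finset ℕ, P ∈ welterVertex v k → 0 < v := by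
    rintro P ⟨hPr, hPc⟩
    have : P.Nonempty := Finset.card_pos.mp (by rw [hPc]; omega)
    obtain ⟨a, ha⟩ := this
    have := hPr ha
    simp only [Finset.mem_range] at this
    omega
  -- membership in the image block set
  have hmemim : ∀ P : Finset ℕ, P ⊆ range v → (φ v P ∈ 𝔅.image (φ v) ↔ P ∈ 𝔅) := by
    intro P hPr
    constructor
    · intro hmem
      rw [Finset.mem_image] at hmem
      obtain ⟨b, hbB, hbe⟩ := hmem
      have : b = P := by
        have h1 := φ_φ (hbl b hbB).1
        rw [hbe, φ_φ hPr] at h1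
        exact h1.symm
      exact this ▸ hbB
    · intro hmem
      exact Finset.mem_image_of_mem _ hmem
  have key : A' = (φ v) '' A := by
    ext P'
    constructor
    · rintro ⟨hP'v, hP'B, hP'count⟩
      have hv : 0 < v := hvpos P' hP'v
      set P := φ v P' with hPdef
      have hP'r : P' ⊆ range v := hP'v.1
      have hP'φ : φ v P = P' := φ_φ hP'r
      have hPv : P ∈ welterVertex v k := ⟨φ_subset hv P', by
        show (φ v P').card = k
        rw [φ_card hP'r, hP'v.2]⟩
      have hPB : P ∉ 𝔅 := by
        intro hmem
        exact hP'B (hP'φ ▸ (hmemim P hPv.1).mpr hmem)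
      -- in-count of P is t+1-i
      have hin : (𝔅.filter fun b => welterEdge b P).card = t + 1 - i := by
        have h1 : {b | b ∈ 𝔅.image (φ v) ∧ welterRel v k P' b}
            = (φ v) '' {b | b ∈ 𝔅 ∧ welterRel v k b P} := by
          rw [← hP'φ]
          exact out_eq_image_in hbl hPv hv
        rw [h1] at hP'count
        rw [Set.ncard_image_of_injOn (by
          intro x hx y hy hxy
          have hxr := (hbl x hx.1).1
          have hyr := (hbl y hy.1).1
          rw [← φ_φ hxr, hxy, φ_φ hyr])] at hP'count
        rw [← count_in hbl hPv]
        exact hP'count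
      have hout : (𝔅.filter fun b => welterEdge P b).card = i := by
        have := out_add_in v t 𝔅 h P hPv.1 hPv.2 hPB
        omega
      refine ⟨P, ⟨hPv, hPB, ?_⟩, hP'φ⟩
      rw [count_out hbl hPv]
      exact hout
    · rintro ⟨P, ⟨hPv, hPB, hPcount⟩, rfl⟩
      have hv : 0 < v := hvpos P hPv
      have hPr : P ⊆ range v := hPv.1
      have hφPv : φ v P ∈ welterVertex v k := ⟨φ_subset hv P, by rw [φ_card hPr, hPv.2]⟩
      refine ⟨hφPv, fun hmem => hPB ((hmemim P hPr).mp hmem), ?_⟩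
      rw [out_eq_image_in hbl hPv hv]
      rw [Set.ncard_image_of_injOn (by
        intro x hx y hy hxy
        have hxr := (hbl x hx.1).1
        have hyr := (hbl y hy.1).1
        rw [← φ_φ hxr, hxy, φ_φ hyr])]
      rw [count_in hbl hPv]
      rw [count_out hbl hPv] at hPcount
      have := out_add_in v t 𝔅 h P hPv.1 hPv.2 hPB
      omega
  rw [key, Set.ncard_image_of_injOn]
  intro x hx y hy hxy
  have hxr : x ⊆ range v := hx.1.1
  have hyr : y ⊆ range v := hy.1.1
  rw [← φ_φ hxr, hxy, φ_φ hyr]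
end

section
/- Let D be a Steiner system S(2,3,v), and let B = {x, b, b'} and C = {x, c, c'} be distinct blocks sharing the point x, with b < b' and b < c < c'. Then |N⁻(B) ∩ N⁻(C)| = [c < b'] + [c' < b'], where [·] is the Iverson bracket and N⁻ is the in-neighborhood in Welter's game Γ_{v,3}. -/
/-- `I(B, C) = |N⁻(B) ∩ N⁻(C)|` in Welter's game `Γ_{v,3}`. -/
noncomputable def ICount (v : ℕ) (B C : Finset ℕ) : ℕ :=
  Set.ncard {P | welterRel v 3 P B ∧ welterRel v 3 P C}

lemma card3_ne {a b c : ℕ} (h : ({a,b,c} : Finset ℕ).card = 3) :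
    a ≠ b ∧ a ≠ c ∧ b ≠ c := by
  refine ⟨?_, ?_, ?_⟩
  · rintro rfl
    simp only [Finset.insert_idem] at h
    have h3 : ({a,c} : Finset ℕ).card ≤ 2 := (Finset.card_insert_le _ _).trans (by simp)
    omega
  · rintro rfl
    have h2 : ({a,b,a} : Finset ℕ) = {a,b} := by ext t; simp; try tauto
    rw [h2] at h
    have h3 : ({a,b} : Finset ℕ).card ≤ 2 := (Finset.card_insert_le _ _).trans (by simp)
    omega
  · rintro rfl
    have h2 : ({a,b,b} : Finset ℕ) = {a,b} := by ext t; simp; try tauto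
    rw [h2] at h
    have h3 : ({a,b} : Finset ℕ).card ≤ 2 := (Finset.card_insert_le _ _).trans (by simp)
    omega

lemma welterRel_iff (v : ℕ) (P B : Finset ℕ) (hB : B ⊆ Finset.range v)
    (hBc : B.card = 3) :
    welterRel v 3 P B ↔
      ∃ q ∈ B, ∃ p, p ∉ B ∧ q < p ∧ p < v ∧ P = insert p (B.erase q) := by
  constructor
  · rintro ⟨⟨hPsub, hPcard⟩, _, p, hp, q, hqP, hqp, hBeq⟩
    have hqB : q ∈ B := by rw [hBeq]; exact Finset.mem_insert_self _ _
    have hpB : p ∉ B := by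
      rw [hBeq]
      intro hmem
      rcases Finset.mem_insert.mp hmem with h1 | h1
      · omega
      · exact Finset.notMem_erase _ _ h1
    have hqPe : q ∉ P.erase p := fun hx => hqP (Finset.mem_of_mem_erase hx)
    refine ⟨q, hqB, p, hpB, hqp, Finset.mem_range.mp (hPsub hp), ?_⟩
    rw [hBeq, Finset.erase_insert hqPe, Finset.insert_erase hp]
  · rintro ⟨q, hqB, p, hpB, hqp, hpv, hPeq⟩
    have hpBe : p ∉ B.erase q := fun hx => hpB (Finset.mem_of_mem_erase hx)
    have hqBe : q ∉ B.erase q := Finset.notMem_erase _ _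
    have hPsub : P ⊆ Finset.range v := by
      rw [hPeq]
      exact Finset.insert_subset (Finset.mem_range.mpr hpv)
        ((Finset.erase_subset _ _).trans hB)
    have hPcard : P.card = 3 := by
      rw [hPeq, Finset.card_insert_of_notMem hpBe, Finset.card_erase_of_mem hqB, hBc]
    refine ⟨⟨hPsub, hPcard⟩, ⟨hB, hBc⟩, p, ?_, q, ?_, hqp, ?_⟩
    · rw [hPeq]; exact Finset.mem_insert_self _ _
    · rw [hPeq]
      intro hmem
      rcases Finset.mem_insert.mp hmem with h1 | h1
      · omega
      · exact hqBe h1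
    · rw [hPeq, Finset.erase_insert hpBe, Finset.insert_erase hqB]

/-- For distinct blocks `B = {x, b, b'}` and `C = {x, c, c'}` of an `S(2, 3, v)` with
`b < b'` and `b < c < c'`, `I(B, C) = [c < b'] + [c' < b']`. -/
theorem stmt_13 (v x b b' c c' : ℕ) (𝔅 : Finset (Finset ℕ)) (h : IsSteiner v 2 3 𝔅)
    (hB : ({x, b, b'} : Finset ℕ) ∈ 𝔅) (hC : ({x, c, c'} : Finset ℕ) ∈ 𝔅)
    (hne : ({x, b, b'} : Finset ℕ) ≠ ({x, c, c'} : Finset ℕ))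
    (hbb : b < b') (hbc : b < c) (hcc : c < c') :
    ICount v {x, b, b'} {x, c, c'}
      = (if c < b' then 1 else 0) + (if c' < b' then 1 else 0) := by
  obtain ⟨hmem, huniq⟩ := h
  obtain ⟨hBsub, hBcard⟩ := hmem _ hB
  obtain ⟨hCsub, hCcard⟩ := hmem _ hC
  obtain ⟨hxb, hxb', _⟩ := card3_ne hBcard
  obtain ⟨hxc, hxc', _⟩ := card3_ne hCcard
  have key2 : ∀ y : ℕ, y ≠ x → y ∈ ({x,b,b'} : Finset ℕ) →
      y ∈ ({x,c,c'} : Finset ℕ) → False := by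
    intro y hyx hy1 hy2
    have hT : ({x, y} : Finset ℕ) ⊆ Finset.range v :=
      Finset.insert_subset (hBsub (by simp)) (Finset.singleton_subset_iff.mpr (hBsub hy1))
    have hTc : ({x, y} : Finset ℕ).card = 2 := by
      rw [Finset.card_insert_of_notMem (by simp [Ne.symm hyx]), Finset.card_singleton]
    have hone := huniq {x, y} hT hTc
    have h2 : 1 < (𝔅.filter fun bl => ({x, y} : Finset ℕ) ⊆ bl).card := by
      refine Finset.one_lt_card.mpr ⟨{x,b,b'}, ?_, {x,c,c'}, ?_, hne⟩
      · exact Finset.mem_filter.mpr ⟨hB,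
          Finset.insert_subset (by simp) (Finset.singleton_subset_iff.mpr hy1)⟩
      · exact Finset.mem_filter.mpr ⟨hC,
          Finset.insert_subset (by simp) (Finset.singleton_subset_iff.mpr hy2)⟩
    omega
  have hbc' : b ≠ c' := by omega
  have hb'c : b' ≠ c := fun e => key2 b' (Ne.symm hxb') (by simp) (by simp [e])
  have hb'c' : b' ≠ c' := fun e => key2 b' (Ne.symm hxb') (by simp) (by simp [e])
  have memiff : ∀ P : Finset ℕ,
      (welterRel v 3 P {x,b,b'} ∧ welterRel v 3 P {x,c,c'}) ↔
      ((∃ q ∈ ({x,b,b'} : Finset ℕ), ∃ p, p ∉ ({x,b,b'} : Finset ℕ) ∧ q < p ∧ p < v ∧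
          P = insert p (({x,b,b'} : Finset ℕ).erase q)) ∧
       (∃ q ∈ ({x,c,c'} : Finset ℕ), ∃ p, p ∉ ({x,c,c'} : Finset ℕ) ∧ q < p ∧ p < v ∧
          P = insert p (({x,c,c'} : Finset ℕ).erase q))) :=
    fun P => and_congr (welterRel_iff v P _ hBsub hBcard) (welterRel_iff v P _ hCsub hCcard)
  have main : ∀ P : Finset ℕ,
      ((∃ q ∈ ({x,b,b'} : Finset ℕ), ∃ p, p ∉ ({x,b,b'} : Finset ℕ) ∧ q < p ∧ p < v ∧
          P = insert p (({x,b,b'} : Finset ℕ).erase q)) ∧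
       (∃ q ∈ ({x,c,c'} : Finset ℕ), ∃ p, p ∉ ({x,c,c'} : Finset ℕ) ∧ q < p ∧ p < v ∧
          P = insert p (({x,c,c'} : Finset ℕ).erase q))) →
      (c < b' ∧ P = {x, b', c'}) ∨ (c' < b' ∧ P = {x, b', c}) := by
    rintro P ⟨⟨q, hq, p, hp, hqp, hpv, hPB⟩, ⟨q', hq', p', hp', hq'p', hp'v, hPC⟩⟩
    have Heq : insert p (({x,b,b'} : Finset ℕ).erase q)
        = insert p' (({x,c,c'} : Finset ℕ).erase q') := hPB.symm.trans hPC
    have H : ∀ a : ℕ, (a = p ∨ (a ≠ q ∧ (a = x ∨ a = b ∨ a = b'))) ↔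
        (a = p' ∨ (a ≠ q' ∧ (a = x ∨ a = c ∨ a = c'))) := by
      intro a
      have := Finset.ext_iff.mp Heq a
      simpa only [Finset.mem_insert, Finset.mem_erase, Finset.mem_singleton] using this
    have Hx := H x
    have Hb := H b
    have Hb' := H b'
    have Hp := H p
    simp only [Finset.mem_insert, Finset.mem_singleton] at hq hq' hp hp'
    clear H Heq hPC
    rcases hq with rfl | rfl | rfl
    · exfalso
      have e1 : b = p' := by clear Hx Hb' Hp; omega
      have e2 : b' = p' := by clear Hx Hb Hp; omega
      omega
    · have e1 : b' = p' := by clear Hx Hb Hp; omega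
      have e2 : p ≠ q' ∧ (p = c ∨ p = c') := by clear Hx Hb Hb'; omega
      have e3 : x ≠ q' := by clear Hb Hb' Hp; omega
      clear Hx Hb Hb' Hp
      rcases e2.2 with rfl | rfl
      · have e4 : c' < b' := by omega
        refine Or.inr ⟨e4, ?_⟩
        rw [hPB]; ext a
        simp only [Finset.mem_insert, Finset.mem_erase, Finset.mem_singleton]
        omega
      · have e4 : c < b' := by omega
        refine Or.inl ⟨e4, ?_⟩
        rw [hPB]; ext a
        simp only [Finset.mem_insert, Finset.mem_erase, Finset.mem_singleton]
        omega
    · exfalso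
      have e1 : b = p' := by clear Hx Hb' Hp; omega
      have e3 : x ≠ q' := by clear Hb Hb' Hp; omega
      clear Hx Hb Hb' Hp
      omega
  unfold ICount
  by_cases h1 : c < b'
  · have hdiff : ({x, b', c'} : Finset ℕ) ≠ {x, b', c} := by
      intro e
      have h5 := Finset.ext_iff.mp e c
      simp only [Finset.mem_insert, Finset.mem_singleton, or_true, iff_true] at h5
      omega
    have mem1 : ((∃ q ∈ ({x,b,b'} : Finset ℕ), ∃ p, p ∉ ({x,b,b'} : Finset ℕ) ∧ q < p ∧ p < v ∧
          ({x, b', c'} : Finset ℕ) = insert p (({x,b,b'} : Finset ℕ).erase q)) ∧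
       (∃ q ∈ ({x,c,c'} : Finset ℕ), ∃ p, p ∉ ({x,c,c'} : Finset ℕ) ∧ q < p ∧ p < v ∧
          ({x, b', c'} : Finset ℕ) = insert p (({x,c,c'} : Finset ℕ).erase q))) := by
      refine ⟨⟨b, by simp, c', ?_, by omega, Finset.mem_range.mp (hCsub (by simp)), ?_⟩,
              ⟨c, by simp, b', ?_, h1, Finset.mem_range.mp (hBsub (by simp)), ?_⟩⟩
      · simp only [Finset.mem_insert, Finset.mem_singleton]; omega
      · ext a
        simp only [Finset.mem_insert, Finset.mem_erase, Finset.mem_singleton]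
        omega
      · simp only [Finset.mem_insert, Finset.mem_singleton]; omega
      · ext a
        simp only [Finset.mem_insert, Finset.mem_erase, Finset.mem_singleton]
        omega
    by_cases h2 : c' < b'
    · have mem2 : ((∃ q ∈ ({x,b,b'} : Finset ℕ), ∃ p, p ∉ ({x,b,b'} : Finset ℕ) ∧ q < p ∧ p < v ∧
            ({x, b', c} : Finset ℕ) = insert p (({x,b,b'} : Finset ℕ).erase q)) ∧
         (∃ q ∈ ({x,c,c'} : Finset ℕ), ∃ p, p ∉ ({x,c,c'} : Finset ℕ) ∧ q < p ∧ p < v ∧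
            ({x, b', c} : Finset ℕ) = insert p (({x,c,c'} : Finset ℕ).erase q))) := by
        refine ⟨⟨b, by simp, c, ?_, hbc, Finset.mem_range.mp (hCsub (by simp)), ?_⟩,
                ⟨c', by simp, b', ?_, h2, Finset.mem_range.mp (hBsub (by simp)), ?_⟩⟩
        · simp only [Finset.mem_insert, Finset.mem_singleton]; omega
        · ext a
          simp only [Finset.mem_insert, Finset.mem_erase, Finset.mem_singleton]
          omega
        · simp only [Finset.mem_insert, Finset.mem_singleton]; omega
        · ext a
          simp only [Finset.mem_insert, Finset.mem_erase, Finset.mem_singleton]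
          omega
      have hsets : {P : Finset ℕ | welterRel v 3 P {x,b,b'} ∧ welterRel v 3 P {x,c,c'}}
          = {({x, b', c'} : Finset ℕ), ({x, b', c} : Finset ℕ)} := by
        ext P
        simp only [Set.mem_setOf_eq, Set.mem_insert_iff, Set.mem_singleton_iff]
        rw [memiff P]
        constructor
        · intro hR
          rcases main P hR with ⟨_, hPe⟩ | ⟨_, hPe⟩
          · exact Or.inl hPe
          · exact Or.inr hPe
        · rintro (rfl | rfl)
          · exact mem1
          · exact mem2
      rw [hsets, Set.ncard_pair hdiff, if_pos h1, if_pos h2]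
    · have hsets : {P : Finset ℕ | welterRel v 3 P {x,b,b'} ∧ welterRel v 3 P {x,c,c'}}
          = {({x, b', c'} : Finset ℕ)} := by
        ext P
        simp only [Set.mem_setOf_eq, Set.mem_singleton_iff]
        rw [memiff P]
        constructor
        · intro hR
          rcases main P hR with ⟨_, hPe⟩ | ⟨hc2, _⟩
          · exact hPe
          · exact absurd hc2 h2
        · rintro rfl
          exact mem1
      rw [hsets, Set.ncard_singleton, if_pos h1, if_neg h2]
  · have h2 : ¬ c' < b' := by omega
    have hsets : {P : Finset ℕ | welterRel v 3 P {x,b,b'} ∧ welterRel v 3 P {x,c,c'}}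
        = ∅ := by
      ext P
      simp only [Set.mem_setOf_eq, Set.mem_empty_iff_false, iff_false]
      intro hR
      rcases (main P ((memiff P).mp hR)) with ⟨hc1, _⟩ | ⟨hc2, _⟩
      · exact h1 hc1
      · exact h2 hc2
    rw [hsets, Set.ncard_empty, if_neg h1, if_neg h2]
end

section
/- Let D be a Steiner system S(2,3,v) and let B, C be distinct blocks. If I(B,C) ≠ I(B^{(i, i+1)}, C^{(i, i+1)}) for some i, where I(B,C) = |N⁻(B) ∩ N⁻(C)| in Welter's game Γ_{v,3} and the superscript denotes applying the transposition swapping i and i+1, then {B, C} = {{i, x, y}, {i+1, x, z}} for some x, y, z ∈ [v] with y ≠ z. -/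
/-!
Let `τ = (i, i+1)`. Applying `τ` to a Welter move `P → Q` (replace `p ∈ P` by a smaller
`q ∉ P`) gives a Welter move `τP → τQ`, unless the move replaces `i+1` by `i`. Hence
`P ↦ τP` maps the common in-neighbours of `B, C` into those of `τB, τC`, unless some common
in-neighbour `P = {i+1, p, x}` reaches `B = {i, p, x}` by that move. The move `P → C` then
replaces `p` by some `q`, because replacing `i+1` would give `|B ∩ C| = 2`, impossible for
two blocks of an `S(2, 3, v)`; so `C = {i+1, x, q}`. As `τ` is an involution and this
exceptional configuration is `τ`-invariant up to exchanging `B` and `C`, the map is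
otherwise a bijection.
-/

open Finset

def IsSwapPair (i : ℕ) (B C : Finset ℕ) : Prop :=
  ∃ x y z, y ≠ z ∧ B = {i, x, y} ∧ C = {i + 1, x, z}

theorem IsSteiner.card_inter_le_one {v k : ℕ} {𝔅 : Finset (Finset ℕ)}
    (h : IsSteiner v 2 k 𝔅) {B C : Finset ℕ} (hB : B ∈ 𝔅) (hC : C ∈ 𝔅) (hne : B ≠ C) :
    #(B ∩ C) ≤ 1 := by
  by_contra! hlt
  obtain ⟨a, ha, b, hb, hab⟩ := one_lt_card.mp hlt
  have hsub : {a, b} ⊆ B ∩ C := by simp [insert_subset_iff, ha, hb]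
  have hT : {a, b} ⊆ range v := hsub.trans (inter_subset_left.trans (h.1 B hB).1)
  have hunique := (h.2 {a, b} hT (card_pair hab)).le
  exact hne (card_le_one.mp hunique B (mem_filter.mpr ⟨hB, hsub.trans inter_subset_left⟩)
    C (mem_filter.mpr ⟨hC, hsub.trans inter_subset_right⟩))

section Swap

variable {i : ℕ}

theorem image_swap_image_swap (s : Finset ℕ) :
    (s.image (Equiv.swap i (i + 1))).image (Equiv.swap i (i + 1)) = s := by
  simp [image_image, Function.comp_def]

theorem image_swap_mem_welterVertex {v k : ℕ} (hiv : i + 1 < v) {P : Finset ℕ}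
    (hP : P ∈ welterVertex v k) : P.image (Equiv.swap i (i + 1)) ∈ welterVertex v k := by
  refine ⟨fun y hy => ?_, by rw [card_image_of_injective _ (Equiv.injective _), hP.2]⟩
  obtain ⟨x, hx, rfl⟩ := mem_image.mp hy
  have hxv := mem_range.mp (hP.1 hx)
  rw [mem_range, Equiv.swap_apply_def]
  split_ifs <;> omega

theorem welterEdge.image_swap_or {P Q : Finset ℕ} (h : welterEdge P Q) :
    welterEdge (P.image (Equiv.swap i (i + 1))) (Q.image (Equiv.swap i (i + 1))) ∨
      i + 1 ∈ P ∧ Q = insert i (P.erase (i + 1)) := by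
  obtain ⟨p, hp, q, hq, hlt, rfl⟩ := h
  by_cases hqp : q = i ∧ p = i + 1
  · obtain ⟨rfl, rfl⟩ := hqp
    exact Or.inr ⟨hp, rfl⟩
  set τ := Equiv.swap i (i + 1)
  refine Or.inl ⟨τ p, mem_image_of_mem τ hp, τ q, ?_, ?_, ?_⟩
  · rwa [τ.injective.mem_finset_image]
  · simp only [τ, Equiv.swap_apply_def]
    split_ifs <;> omega
  · rw [image_insert, image_erase τ.injective]

theorem welterRel.image_swap_or {v k : ℕ} (hiv : i + 1 < v) {P Q : Finset ℕ}
    (h : welterRel v k P Q) :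
    welterRel v k (P.image (Equiv.swap i (i + 1))) (Q.image (Equiv.swap i (i + 1))) ∨
      i + 1 ∈ P ∧ Q = insert i (P.erase (i + 1)) :=
  h.2.2.image_swap_or.imp_left fun he =>
    ⟨image_swap_mem_welterVertex hiv h.1, image_swap_mem_welterVertex hiv h.2.1, he⟩

theorem isSwapPair_of_welterEdge {P B C : Finset ℕ} (hP : #P = 3) (hiP : i + 1 ∈ P)
    (hB : B = insert i (P.erase (i + 1))) (hC : welterEdge P C)
    (hBC : #(B ∩ C) ≤ 1) : IsSwapPair i B C := by
  obtain ⟨p, hp, q, hq, -, rfl⟩ := hC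
  subst hB
  have hpi : p ≠ i + 1 := by
    rintro rfl
    have hsub := card_le_card (subset_inter (subset_insert i (P.erase (i + 1)))
      (subset_insert q (P.erase (i + 1))))
    rw [card_erase_of_mem hiP, hP] at hsub
    omega
  have hp' : p ∈ P.erase (i + 1) := mem_erase.mpr ⟨hpi, hp⟩
  obtain ⟨x, hx⟩ := card_eq_one.mp
    (by rw [card_erase_of_mem hp', card_erase_of_mem hiP, hP] : #((P.erase (i + 1)).erase p) = 1)
  have hBx : P.erase (i + 1) = {p, x} := by rw [← insert_erase hp', hx]
  have hCx : P.erase p = {i + 1, x} := by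
    rw [← insert_erase (mem_erase.mpr ⟨hpi.symm, hiP⟩), erase_right_comm, hx]
  refine ⟨x, p, q, ne_of_mem_of_not_mem hp hq, ?_, ?_⟩
  · rw [hBx, pair_comm]
  · rw [hCx, insert_comm, pair_comm]

theorem IsSwapPair.of_image_swap {B C : Finset ℕ}
    (h : IsSwapPair i (B.image (Equiv.swap i (i + 1))) (C.image (Equiv.swap i (i + 1)))) :
    IsSwapPair i C B := by
  obtain ⟨x, y, z, hyz, hB, hC⟩ := h
  set τ := Equiv.swap i (i + 1)
  refine ⟨τ x, τ z, τ y, (τ.injective.ne hyz).symm, ?_, ?_⟩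
  · rw [← image_swap_image_swap C, hC]
    simp [τ]
  · rw [← image_swap_image_swap B, hB]
    simp [τ]

theorem welterRel_image_swap_of_not_isSwapPair {v : ℕ} (hiv : i + 1 < v) {B C P : Finset ℕ}
    (hBC : #(B ∩ C) ≤ 1) (hnBC : ¬IsSwapPair i B C) (hnCB : ¬IsSwapPair i C B)
    (hPB : welterRel v 3 P B) (hPC : welterRel v 3 P C) :
    welterRel v 3 (P.image (Equiv.swap i (i + 1))) (B.image (Equiv.swap i (i + 1))) ∧
      welterRel v 3 (P.image (Equiv.swap i (i + 1))) (C.image (Equiv.swap i (i + 1))) := by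
  rcases hPB.image_swap_or hiv with hB | ⟨hiP, hB⟩
  · rcases hPC.image_swap_or hiv with hC | ⟨hiP, hC⟩
    · exact ⟨hB, hC⟩
    · exact absurd (isSwapPair_of_welterEdge hPC.1.2 hiP hC hPB.2.2
        (by rwa [inter_comm])) hnCB
  · exact absurd (isSwapPair_of_welterEdge hPB.1.2 hiP hB hPC.2.2 hBC) hnBC

theorem ICount_image_swap {v : ℕ} (hiv : i + 1 < v) {B C : Finset ℕ} (hBC : #(B ∩ C) ≤ 1)
    (hnBC : ¬IsSwapPair i B C) (hnCB : ¬IsSwapPair i C B) :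
    ICount v (B.image (Equiv.swap i (i + 1))) (C.image (Equiv.swap i (i + 1))) =
      ICount v B C := by
  set τ := Equiv.swap i (i + 1)
  have hBCτ : #(B.image τ ∩ C.image τ) ≤ 1 := by
    rwa [← image_inter _ _ τ.injective, card_image_of_injective _ τ.injective]
  have hset : {P | welterRel v 3 P (B.image τ) ∧ welterRel v 3 P (C.image τ)} =
      (·.image τ) '' {P | welterRel v 3 P B ∧ welterRel v 3 P C} := by
    ext Q
    constructor
    · rintro ⟨hQB, hQC⟩
      refine ⟨Q.image τ, ?_, image_swap_image_swap Q⟩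
      simpa only [τ, image_swap_image_swap, Set.mem_ofPred_eq] using
        welterRel_image_swap_of_not_isSwapPair hiv hBCτ (fun h => hnCB h.of_image_swap)
          (fun h => hnBC h.of_image_swap) hQB hQC
    · rintro ⟨P, ⟨hPB, hPC⟩, rfl⟩
      exact welterRel_image_swap_of_not_isSwapPair hiv hBC hnBC hnCB hPB hPC
  rw [ICount, ICount, hset, Set.ncard_image_of_injective _ (image_injective τ.injective)]

end Swap

/-- For distinct blocks `B, C` of an `S(2, 3, v)` and the transposition `(i, i+1)` of
`{0, ..., v-1}`: if `I(B, C) ≠ I(B^{(i i+1)}, C^{(i i+1)})`, then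
`{B, C} = {{i, x, y}, {i+1, x, z}}` for some `x, y, z` with `y ≠ z`. -/
theorem stmt_14 (v : ℕ) (𝔅 : Finset (Finset ℕ)) (h : IsSteiner v 2 3 𝔅)
    (B C : Finset ℕ) (hB : B ∈ 𝔅) (hC : C ∈ 𝔅) (hne : B ≠ C)
    (i : ℕ) (hiv : i + 1 < v)
    (hI : ICount v B C
      ≠ ICount v (B.image (Equiv.swap i (i + 1))) (C.image (Equiv.swap i (i + 1)))) :
    ∃ x y z : ℕ, y ≠ z ∧
      ((B = {i, x, y} ∧ C = {i + 1, x, z}) ∨ (B = {i + 1, x, z} ∧ C = {i, x, y})) := by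
  by_contra hno_pair
  refine hI (ICount_image_swap hiv (h.card_inter_le_one hB hC hne) ?_ ?_).symm
  · rintro ⟨x, y, z, hyz, hB, hC⟩
    exact hno_pair ⟨x, y, z, hyz, Or.inl ⟨hB, hC⟩⟩
  · rintro ⟨x, y, z, hyz, hC, hB⟩
    exact hno_pair ⟨x, y, z, hyz, Or.inr ⟨hB, hC⟩⟩
end

section
/- Let D be an S(2,3,v) Steiner triple system, and suppose {x, b, b'}, {x, c, c'}, {y, b, c}, {y, b', c'}, {z, b, c'}, {z, b', c} are blocks with b < b' and b < c < c' (the configuration obtained from two blocks through x in a projective Steiner triple system). Then I({x,b,b'},{x,c,c'}) + I({y,b,c},{y,b',c'}) + I({z,b,c'},{z,b',c}) = 3, where I(B,C) = |N⁻(B) ∩ N⁻(C)| in Welter's game Γ_{v,3}. -/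
lemma rel_iff {v : ℕ} (B P : Finset ℕ) (hBsub : B ⊆ Finset.range v) (hBcard : B.card = 3) :
    welterRel v 3 P B ↔
      ∃ q ∈ B, ∃ p, p ∉ B ∧ q < p ∧ p < v ∧ P = insert p (B.erase q) := by
  constructor
  · intro h
    obtain ⟨⟨hPsub, hPcard⟩, _, p, hpP, q, hqP, hqp, hBeq⟩ := h
    refine ⟨q, ?_, p, ?_, hqp, ?_, ?_⟩
    · rw [hBeq]; exact Finset.mem_insert_self _ _
    · rw [hBeq]
      intro hmem
      rcases Finset.mem_insert.mp hmem with h | h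
      · omega
      · exact (Finset.notMem_erase p P) h
    · exact Finset.mem_range.mp (hPsub hpP)
    · rw [hBeq, Finset.erase_insert (fun h => hqP (Finset.mem_of_mem_erase h)),
        Finset.insert_erase hpP]
  · rintro ⟨q, hqB, p, hpB, hqp, hpv, rfl⟩
    have hpe : p ∉ B.erase q := fun h => hpB (Finset.mem_of_mem_erase h)
    have hqe : q ∉ insert p (B.erase q) := by
      simp only [Finset.mem_insert]
      rintro (h | h)
      · omega
      · exact (Finset.notMem_erase q B) h
    refine ⟨⟨?_, ?_⟩, ⟨hBsub, hBcard⟩, p, Finset.mem_insert_self _ _, q, hqe, hqp, ?_⟩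
    · intro t ht
      rcases Finset.mem_insert.mp ht with rfl | h
      · exact Finset.mem_range.mpr hpv
      · exact hBsub (Finset.mem_of_mem_erase h)
    · rw [Finset.card_insert_of_notMem hpe, Finset.card_erase_of_mem hqB, hBcard]
    · rw [Finset.erase_insert hpe, Finset.insert_erase hqB]

lemma mem_common_iff {v a u u' w w' : ℕ}
    (hau : a ≠ u) (hau' : a ≠ u') (huu' : u ≠ u')
    (haw : a ≠ w) (haw' : a ≠ w') (hww' : w ≠ w')
    (huw : u ≠ w) (huw' : u ≠ w') (hu'w : u' ≠ w) (hu'w' : u' ≠ w')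
    (hav : a < v) (huv : u < v) (hu'v : u' < v) (hwv : w < v) (hw'v : w' < v)
    (P : Finset ℕ) :
    (welterRel v 3 P {a, u, u'} ∧ welterRel v 3 P {a, w, w'}) ↔
      (u' < w ∧ w' < u ∧ P = {a, u, w}) ∨ (u' < w' ∧ w < u ∧ P = {a, u, w'}) ∨
      (u < w ∧ w' < u' ∧ P = {a, u', w}) ∨ (u < w' ∧ w < u' ∧ P = {a, u', w'}) := by
  have hBsub : ({a, u, u'} : Finset ℕ) ⊆ Finset.range v := by
    intro t ht
    rw [Finset.mem_range]
    simp only [Finset.mem_insert, Finset.mem_singleton] at ht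
    omega
  have hCsub : ({a, w, w'} : Finset ℕ) ⊆ Finset.range v := by
    intro t ht
    rw [Finset.mem_range]
    simp only [Finset.mem_insert, Finset.mem_singleton] at ht
    omega
  have hBcard : ({a, u, u'} : Finset ℕ).card = 3 :=
    Finset.card_eq_three.mpr ⟨a, u, u', hau, hau', huu', rfl⟩
  have hCcard : ({a, w, w'} : Finset ℕ).card = 3 :=
    Finset.card_eq_three.mpr ⟨a, w, w', haw, haw', hww', rfl⟩
  constructor
  · rintro ⟨hB, hC⟩
    rw [rel_iff _ _ hBsub hBcard] at hB
    rw [rel_iff _ _ hCsub hCcard] at hC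
    obtain ⟨q1, hq1, p1, hp1, hlt1, hv1, rfl⟩ := hB
    obtain ⟨q2, hq2, p2, hp2, hlt2, hv2, hP⟩ := hC
    simp only [Finset.mem_insert, Finset.mem_singleton] at hq1 hq2 hp1 hp2
    push_neg at hp1 hp2
    rw [Finset.ext_iff] at hP
    simp only [Finset.mem_insert, Finset.mem_erase, Finset.mem_singleton] at hP
    have hPa := hP a
    have hPu := hP u
    have hPu' := hP u'
    have hPw := hP w
    have hPw' := hP w'
    rcases hq1 with rfl | rfl | rfl <;> rcases hq2 with rfl | rfl | rfl
    · exfalso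
      have h1 := hPu
      have h2 := hPu'
      clear hP hPa hPu hPu' hPw hPw'
      simp [hau, hau.symm, hau', hau'.symm, huu', huu'.symm, haw, haw.symm, haw', haw'.symm,
        hww', hww'.symm, huw, huw.symm, huw', huw'.symm, hu'w, hu'w.symm, hu'w', hu'w'.symm] at h1 h2
      omega
    · exfalso
      have h1 := hPa
      clear hP hPa hPu hPu' hPw hPw'
      simp [hau, hau.symm, hau', hau'.symm, huu', huu'.symm, haw, haw.symm, haw', haw'.symm,
        hww', hww'.symm, huw, huw.symm, huw', huw'.symm, hu'w, hu'w.symm, hu'w', hu'w'.symm] at h1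
      omega
    · exfalso
      have h1 := hPa
      clear hP hPa hPu hPu' hPw hPw'
      simp [hau, hau.symm, hau', hau'.symm, huu', huu'.symm, haw, haw.symm, haw', haw'.symm,
        hww', hww'.symm, huw, huw.symm, huw', huw'.symm, hu'w, hu'w.symm, hu'w', hu'w'.symm] at h1
      omega
    · exfalso
      have h1 := hPa
      clear hP hPa hPu hPu' hPw hPw'
      simp [hau, hau.symm, hau', hau'.symm, huu', huu'.symm, haw, haw.symm, haw', haw'.symm,
        hww', hww'.symm, huw, huw.symm, huw', huw'.symm, hu'w, hu'w.symm, hu'w', hu'w'.symm] at h1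
      omega
    · -- q1 = u, q2 = w : p1 = w', p2 = u'
      have h1 := hPw'
      have h2 := hPu'
      clear hP hPa hPu hPu' hPw hPw'
      simp [hau, hau.symm, hau', hau'.symm, huu', huu'.symm, haw, haw.symm, haw', haw'.symm,
        hww', hww'.symm, huw, huw.symm, huw', huw'.symm, hu'w, hu'w.symm, hu'w', hu'w'.symm] at h1 h2
      subst h1; subst h2
      refine Or.inr (Or.inr (Or.inr ⟨hlt1, hlt2, ?_⟩))
      ext t
      simp only [Finset.mem_insert, Finset.mem_erase, Finset.mem_singleton]
      omega
    · -- q1 = u, q2 = w' : p1 = w, p2 = u'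
      have h1 := hPw
      have h2 := hPu'
      clear hP hPa hPu hPu' hPw hPw'
      simp [hau, hau.symm, hau', hau'.symm, huu', huu'.symm, haw, haw.symm, haw', haw'.symm,
        hww', hww'.symm, huw, huw.symm, huw', huw'.symm, hu'w, hu'w.symm, hu'w', hu'w'.symm] at h1 h2
      subst h1; subst h2
      refine Or.inr (Or.inr (Or.inl ⟨hlt1, hlt2, ?_⟩))
      ext t
      simp only [Finset.mem_insert, Finset.mem_erase, Finset.mem_singleton]
      omega
    · exfalso
      have h1 := hPa
      clear hP hPa hPu hPu' hPw hPw'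
      simp [hau, hau.symm, hau', hau'.symm, huu', huu'.symm, haw, haw.symm, haw', haw'.symm,
        hww', hww'.symm, huw, huw.symm, huw', huw'.symm, hu'w, hu'w.symm, hu'w', hu'w'.symm] at h1
      omega
    · -- q1 = u', q2 = w : p1 = w', p2 = u
      have h1 := hPw'
      have h2 := hPu
      clear hP hPa hPu hPu' hPw hPw'
      simp [hau, hau.symm, hau', hau'.symm, huu', huu'.symm, haw, haw.symm, haw', haw'.symm,
        hww', hww'.symm, huw, huw.symm, huw', huw'.symm, hu'w, hu'w.symm, hu'w', hu'w'.symm] at h1 h2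
      subst h1; subst h2
      refine Or.inr (Or.inl ⟨hlt1, hlt2, ?_⟩)
      ext t
      simp only [Finset.mem_insert, Finset.mem_erase, Finset.mem_singleton]
      omega
    · -- q1 = u', q2 = w' : p1 = w, p2 = u
      have h1 := hPw
      have h2 := hPu
      clear hP hPa hPu hPu' hPw hPw'
      simp [hau, hau.symm, hau', hau'.symm, huu', huu'.symm, haw, haw.symm, haw', haw'.symm,
        hww', hww'.symm, huw, huw.symm, huw', huw'.symm, hu'w, hu'w.symm, hu'w', hu'w'.symm] at h1 h2
      subst h1; subst h2
      refine Or.inl ⟨hlt1, hlt2, ?_⟩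
      ext t
      simp only [Finset.mem_insert, Finset.mem_erase, Finset.mem_singleton]
      omega
  · rintro (⟨h1, h2, rfl⟩ | ⟨h1, h2, rfl⟩ | ⟨h1, h2, rfl⟩ | ⟨h1, h2, rfl⟩)
    · refine ⟨(rel_iff _ _ hBsub hBcard).mpr ⟨u', by simp, w, ?_, h1, hwv, ?_⟩,
        (rel_iff _ _ hCsub hCcard).mpr ⟨w', by simp, u, ?_, h2, huv, ?_⟩⟩
      · simp only [Finset.mem_insert, Finset.mem_singleton]; omega
      · ext t
        simp only [Finset.mem_insert, Finset.mem_erase, Finset.mem_singleton]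
        omega
      · simp only [Finset.mem_insert, Finset.mem_singleton]; omega
      · ext t
        simp only [Finset.mem_insert, Finset.mem_erase, Finset.mem_singleton]
        omega
    · refine ⟨(rel_iff _ _ hBsub hBcard).mpr ⟨u', by simp, w', ?_, h1, hw'v, ?_⟩,
        (rel_iff _ _ hCsub hCcard).mpr ⟨w, by simp, u, ?_, h2, huv, ?_⟩⟩
      · simp only [Finset.mem_insert, Finset.mem_singleton]; omega
      · ext t
        simp only [Finset.mem_insert, Finset.mem_erase, Finset.mem_singleton]
        omega
      · simp only [Finset.mem_insert, Finset.mem_singleton]; omega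
      · ext t
        simp only [Finset.mem_insert, Finset.mem_erase, Finset.mem_singleton]
        omega
    · refine ⟨(rel_iff _ _ hBsub hBcard).mpr ⟨u, by simp, w, ?_, h1, hwv, ?_⟩,
        (rel_iff _ _ hCsub hCcard).mpr ⟨w', by simp, u', ?_, h2, hu'v, ?_⟩⟩
      · simp only [Finset.mem_insert, Finset.mem_singleton]; omega
      · ext t
        simp only [Finset.mem_insert, Finset.mem_erase, Finset.mem_singleton]
        omega
      · simp only [Finset.mem_insert, Finset.mem_singleton]; omega
      · ext t
        simp only [Finset.mem_insert, Finset.mem_erase, Finset.mem_singleton]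
        omega
    · refine ⟨(rel_iff _ _ hBsub hBcard).mpr ⟨u, by simp, w', ?_, h1, hw'v, ?_⟩,
        (rel_iff _ _ hCsub hCcard).mpr ⟨w, by simp, u', ?_, h2, hu'v, ?_⟩⟩
      · simp only [Finset.mem_insert, Finset.mem_singleton]; omega
      · ext t
        simp only [Finset.mem_insert, Finset.mem_erase, Finset.mem_singleton]
        omega
      · simp only [Finset.mem_insert, Finset.mem_singleton]; omega
      · ext t
        simp only [Finset.mem_insert, Finset.mem_erase, Finset.mem_singleton]
        omega

lemma ncard_cond_singleton {α : Type*} (c : Prop) [Decidable c] (A : α) :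
    Set.ncard {P : α | c ∧ P = A} = if c then 1 else 0 := by
  by_cases h : c
  · rw [if_pos h, show {P : α | c ∧ P = A} = {A} from by ext P; simp [h],
      Set.ncard_singleton]
  · rw [if_neg h, show {P : α | c ∧ P = A} = ∅ from by ext P; simp [h],
      Set.ncard_empty]

lemma ncard_cond_cons {α : Type*} (c : Prop) [Decidable c] (A : α) (S : Set α)
    (hS : S.Finite) (hA : A ∉ S) :
    Set.ncard {P | (c ∧ P = A) ∨ P ∈ S} = (if c then 1 else 0) + S.ncard := by
  by_cases h : c
  · rw [if_pos h, show {P | (c ∧ P = A) ∨ P ∈ S} = insert A S from by ext P; simp [h],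
      Set.ncard_insert_of_notMem hA hS]
    omega
  · rw [if_neg h, show {P | (c ∧ P = A) ∨ P ∈ S} = S from by ext P; simp [h]]
    omega

lemma ncard_four {α : Type*} (c1 c2 c3 c4 : Prop)
    [Decidable c1] [Decidable c2] [Decidable c3] [Decidable c4]
    (A1 A2 A3 A4 : α) (h12 : A1 ≠ A2) (h13 : A1 ≠ A3) (h14 : A1 ≠ A4)
    (h23 : A2 ≠ A3) (h24 : A2 ≠ A4) (h34 : A3 ≠ A4) :
    Set.ncard {P : α | (c1 ∧ P = A1) ∨ (c2 ∧ P = A2) ∨ (c3 ∧ P = A3) ∨ (c4 ∧ P = A4)} =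
      (if c1 then 1 else 0) + (if c2 then 1 else 0) + (if c3 then 1 else 0) +
        (if c4 then 1 else 0) := by
  have hf4 : ({P : α | c4 ∧ P = A4}).Finite :=
    (Set.finite_singleton A4).subset (by rintro P ⟨-, rfl⟩; simp)
  have hf3 : ({P : α | (c3 ∧ P = A3) ∨ P ∈ {P : α | c4 ∧ P = A4}}).Finite :=
    (Set.toFinite ({A3, A4} : Set α)).subset
      (by rintro P (⟨-, rfl⟩ | ⟨-, rfl⟩) <;> simp)
  have hf2 : ({P : α | (c2 ∧ P = A2) ∨ P ∈
      {P : α | (c3 ∧ P = A3) ∨ P ∈ {P : α | c4 ∧ P = A4}}}).Finite :=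
    (Set.toFinite ({A2, A3, A4} : Set α)).subset
      (by rintro P (⟨-, rfl⟩ | ⟨-, rfl⟩ | ⟨-, rfl⟩) <;> simp)
  have hm3 : A3 ∉ {P : α | c4 ∧ P = A4} := by rintro ⟨-, h⟩; exact h34 h
  have hm2 : A2 ∉ {P : α | (c3 ∧ P = A3) ∨ P ∈ {P : α | c4 ∧ P = A4}} := by
    rintro (⟨-, h⟩ | ⟨-, h⟩)
    · exact h23 h
    · exact h24 h
  have hm1 : A1 ∉ {P : α | (c2 ∧ P = A2) ∨ P ∈
      {P : α | (c3 ∧ P = A3) ∨ P ∈ {P : α | c4 ∧ P = A4}}} := by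
    rintro (⟨-, h⟩ | ⟨-, h⟩ | ⟨-, h⟩)
    · exact h12 h
    · exact h13 h
    · exact h14 h
  have e0 : {P : α | (c1 ∧ P = A1) ∨ (c2 ∧ P = A2) ∨ (c3 ∧ P = A3) ∨ (c4 ∧ P = A4)}
      = {P : α | (c1 ∧ P = A1) ∨ P ∈ {P : α | (c2 ∧ P = A2) ∨ P ∈
          {P : α | (c3 ∧ P = A3) ∨ P ∈ {P : α | c4 ∧ P = A4}}}} := rfl
  rw [e0, ncard_cond_cons c1 A1 _ hf2 hm1, ncard_cond_cons c2 A2 _ hf3 hm2,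
    ncard_cond_cons c3 A3 _ hf4 hm3, ncard_cond_singleton c4 A4]
  ring

lemma key {v a u u' w w' : ℕ}
    (hau : a ≠ u) (hau' : a ≠ u') (huu' : u ≠ u')
    (haw : a ≠ w) (haw' : a ≠ w') (hww' : w ≠ w')
    (huw : u ≠ w) (huw' : u ≠ w') (hu'w : u' ≠ w) (hu'w' : u' ≠ w')
    (hav : a < v) (huv : u < v) (hu'v : u' < v) (hwv : w < v) (hw'v : w' < v) :
    ICount v {a, u, u'} {a, w, w'} =
      (if u' < w ∧ w' < u then 1 else 0) + (if u' < w' ∧ w < u then 1 else 0) +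
      (if u < w ∧ w' < u' then 1 else 0) + (if u < w' ∧ w < u' then 1 else 0) := by
  have hset : {P | welterRel v 3 P {a, u, u'} ∧ welterRel v 3 P {a, w, w'}} =
      {P : Finset ℕ | ((u' < w ∧ w' < u) ∧ P = {a, u, w}) ∨
        ((u' < w' ∧ w < u) ∧ P = {a, u, w'}) ∨
        ((u < w ∧ w' < u') ∧ P = {a, u', w}) ∨
        ((u < w' ∧ w < u') ∧ P = {a, u', w'})} := by
    ext P
    simp only [Set.mem_setOf_eq, and_assoc]
    exact mem_common_iff hau hau' huu' haw haw' hww' huw huw' hu'w hu'w'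
      hav huv hu'v hwv hw'v P
  have h12 : ({a, u, w} : Finset ℕ) ≠ {a, u, w'} := by
    intro hEq
    have h := Finset.ext_iff.mp hEq w
    simp [hau, hau.symm, hau', hau'.symm, huu', huu'.symm, haw, haw.symm, haw', haw'.symm,
      hww', hww'.symm, huw, huw.symm, huw', huw'.symm, hu'w, hu'w.symm, hu'w', hu'w'.symm] at h
  have h13 : ({a, u, w} : Finset ℕ) ≠ {a, u', w} := by
    intro hEq
    have h := Finset.ext_iff.mp hEq u
    simp [hau, hau.symm, hau', hau'.symm, huu', huu'.symm, haw, haw.symm, haw', haw'.symm,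
      hww', hww'.symm, huw, huw.symm, huw', huw'.symm, hu'w, hu'w.symm, hu'w', hu'w'.symm] at h
  have h14 : ({a, u, w} : Finset ℕ) ≠ {a, u', w'} := by
    intro hEq
    have h := Finset.ext_iff.mp hEq u
    simp [hau, hau.symm, hau', hau'.symm, huu', huu'.symm, haw, haw.symm, haw', haw'.symm,
      hww', hww'.symm, huw, huw.symm, huw', huw'.symm, hu'w, hu'w.symm, hu'w', hu'w'.symm] at h
  have h23 : ({a, u, w'} : Finset ℕ) ≠ {a, u', w} := by
    intro hEq
    have h := Finset.ext_iff.mp hEq u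
    simp [hau, hau.symm, hau', hau'.symm, huu', huu'.symm, haw, haw.symm, haw', haw'.symm,
      hww', hww'.symm, huw, huw.symm, huw', huw'.symm, hu'w, hu'w.symm, hu'w', hu'w'.symm] at h
  have h24 : ({a, u, w'} : Finset ℕ) ≠ {a, u', w'} := by
    intro hEq
    have h := Finset.ext_iff.mp hEq u
    simp [hau, hau.symm, hau', hau'.symm, huu', huu'.symm, haw, haw.symm, haw', haw'.symm,
      hww', hww'.symm, huw, huw.symm, huw', huw'.symm, hu'w, hu'w.symm, hu'w', hu'w'.symm] at h
  have h34 : ({a, u', w} : Finset ℕ) ≠ {a, u', w'} := by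
    intro hEq
    have h := Finset.ext_iff.mp hEq w
    simp [hau, hau.symm, hau', hau'.symm, huu', huu'.symm, haw, haw.symm, haw', haw'.symm,
      hww', hww'.symm, huw, huw.symm, huw', huw'.symm, hu'w, hu'w.symm, hu'w', hu'w'.symm] at h
  unfold ICount
  rw [hset, ncard_four _ _ _ _ _ _ _ _ h12 h13 h14 h23 h24 h34]

lemma card3 {p q r : ℕ} (h : ({p, q, r} : Finset ℕ).card = 3) :
    p ≠ q ∧ p ≠ r ∧ q ≠ r := by
  refine ⟨?_, ?_, ?_⟩ <;> rintro rfl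
  · have hs : ({p, p, r} : Finset ℕ) ⊆ {p, r} := by
      intro t ht; simp only [Finset.mem_insert, Finset.mem_singleton] at ht ⊢; omega
    have h1 := Finset.card_le_card hs
    have h2 := Finset.card_insert_le p ({r} : Finset ℕ)
    simp only [Finset.card_singleton] at h2
    omega
  · have hs : ({p, q, p} : Finset ℕ) ⊆ {p, q} := by
      intro t ht; simp only [Finset.mem_insert, Finset.mem_singleton] at ht ⊢; omega
    have h1 := Finset.card_le_card hs
    have h2 := Finset.card_insert_le p ({q} : Finset ℕ)
    simp only [Finset.card_singleton] at h2
    omega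
  · have hs : ({p, q, q} : Finset ℕ) ⊆ {p, q} := by
      intro t ht; simp only [Finset.mem_insert, Finset.mem_singleton] at ht ⊢; omega
    have h1 := Finset.card_le_card hs
    have h2 := Finset.card_insert_le p ({q} : Finset ℕ)
    simp only [Finset.card_singleton] at h2
    omega


/-- For the projective configuration of six blocks `{x,b,b'}, {x,c,c'}, {y,b,c},
`{y,b',c'}, {z,b,c'}, {z,b',c}` of an `S(2, 3, v)` with `b < b'` and `b < c < c'`,
the three `I`-values of the paired blocks sum to 3. -/
theorem stmt_16 (v x y z b b' c c' : ℕ) (𝔅 : Finset (Finset ℕ))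
    (h : IsSteiner v 2 3 𝔅)
    (h1 : ({x, b, b'} : Finset ℕ) ∈ 𝔅) (h2 : ({x, c, c'} : Finset ℕ) ∈ 𝔅)
    (h3 : ({y, b, c} : Finset ℕ) ∈ 𝔅) (h4 : ({y, b', c'} : Finset ℕ) ∈ 𝔅)
    (h5 : ({z, b, c'} : Finset ℕ) ∈ 𝔅) (h6 : ({z, b', c} : Finset ℕ) ∈ 𝔅)
    (hne1 : ({x, b, b'} : Finset ℕ) ≠ ({x, c, c'} : Finset ℕ))
    (hne2 : ({y, b, c} : Finset ℕ) ≠ ({y, b', c'} : Finset ℕ))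
    (hne3 : ({z, b, c'} : Finset ℕ) ≠ ({z, b', c} : Finset ℕ))
    (hbb : b < b') (hbc : b < c) (hcc : c < c') :
    ICount v {x, b, b'} {x, c, c'} + ICount v {y, b, c} {y, b', c'}
      + ICount v {z, b, c'} {z, b', c} = 3 := by
  obtain ⟨hBl, -⟩ := h
  have d1 := card3 (hBl _ h1).2
  have d2 := card3 (hBl _ h2).2
  have d3 := card3 (hBl _ h3).2
  have d4 := card3 (hBl _ h4).2
  have d5 := card3 (hBl _ h5).2
  have d6 := card3 (hBl _ h6).2
  have hxv : x < v := Finset.mem_range.mp ((hBl _ h1).1 (by simp))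
  have hyv : y < v := Finset.mem_range.mp ((hBl _ h3).1 (by simp))
  have hzv : z < v := Finset.mem_range.mp ((hBl _ h5).1 (by simp))
  have hbv : b < v := Finset.mem_range.mp ((hBl _ h1).1 (by simp))
  have hb'v : b' < v := Finset.mem_range.mp ((hBl _ h1).1 (by simp))
  have hcv : c < v := Finset.mem_range.mp ((hBl _ h2).1 (by simp))
  have hc'v : c' < v := Finset.mem_range.mp ((hBl _ h2).1 (by simp))
  obtain ⟨hxb, hxb', hbb'⟩ := d1
  obtain ⟨hxc, hxc', hcc'⟩ := d2
  obtain ⟨hyb, hyc, hbc'0⟩ := d3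
  obtain ⟨hyb', hyc', hb'c'⟩ := d4
  obtain ⟨hzb, hzc', hbc''⟩ := d5
  obtain ⟨hzb', hzc, hb'c⟩ := d6
  have k1 := key hxb hxb' hbb' hxc hxc' hcc' (by omega) (by omega) hb'c hb'c'
    hxv hbv hb'v hcv hc'v
  have k2 := key hyb hyc (by omega) hyb' hyc' hb'c' hbb' (by omega) (Ne.symm hb'c) hcc'
    hyv hbv hcv hb'v hc'v
  have k3 := key hzb hzc' (by omega) hzb' hzc hb'c (hbb') (by omega) (Ne.symm hb'c') (Ne.symm hcc')
    hzv hbv hc'v hb'v hcv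
  rw [k1, k2, k3]
  rw [if_neg (show ¬(b' < c ∧ c' < b) by omega),
    if_neg (show ¬(b' < c' ∧ c < b) by omega),
    if_neg (show ¬(c < b' ∧ c' < b) by omega),
    if_neg (show ¬(c < c' ∧ b' < b) by omega),
    if_neg (show ¬(b < b' ∧ c' < c) by omega),
    if_neg (show ¬(c' < b' ∧ c < b) by omega),
    if_neg (show ¬(c' < c ∧ b' < b) by omega),
    if_pos (show b < b' ∧ c < c' from ⟨hbb, hcc⟩)]
  have hb'c2 : b' ≠ c := hb'c
  have hb'c'2 : b' ≠ c' := hb'c'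
  split_ifs <;> omega
end

section
/- Let D be a Steiner system S(1,2,2v) (a perfect matching design on [2v]) with block set B, and let Q̄(D) denote the set of 2-subsets of [2v] that are neither blocks nor in-neighbors of blocks in Welter's game Γ_{2v,2}. Suppose {0, w} ∈ B, and let E be the S(1,2,2v−2) obtained from the blocks of D other than {0,w} via the order-preserving bijection from [2v] \ {0, w} to [2v−2]. Then |Q̄(D)| = (w − 1) + |Q̄(E)|. -/
/-- `Q*(D) = 𝔅 ∪ ⋃_{B ∈ 𝔅} N⁻(B)` in Welter's game `Γ_{v,k}`. -/
def qstarW (v k : ℕ) (𝔅 : Finset (Finset ℕ)) : Set (Finset ℕ) :=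
  (↑𝔅 : Set (Finset ℕ)) ∪ {P | ∃ b ∈ 𝔅, welterRel v k P b}

/-- `Q̄(D)`: the `k`-subsets of `{0, ..., v-1}` that are neither blocks nor
in-neighbors of blocks in Welter's game `Γ_{v,k}`. -/
def qbarW (v k : ℕ) (𝔅 : Finset (Finset ℕ)) : Set (Finset ℕ) :=
  welterVertex v k \ qstarW v k 𝔅

namespace Stmt18

lemma erase_pair_left {a b : ℕ} (h : a ≠ b) : ({a,b} : Finset ℕ).erase a = {b} := by
  ext x
  simp only [Finset.mem_erase, Finset.mem_insert, Finset.mem_singleton]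
  omega

lemma erase_pair_right {a b : ℕ} (h : a ≠ b) : ({a,b} : Finset ℕ).erase b = {a} := by
  ext x
  simp only [Finset.mem_erase, Finset.mem_insert, Finset.mem_singleton]
  omega

lemma card_two' {s : Finset ℕ} (h : s.card = 2) : ∃ a b, a < b ∧ s = {a, b} := by
  obtain ⟨a, b, hab, rfl⟩ := Finset.card_eq_two.mp h
  rcases lt_or_gt_of_ne hab with h' | h'
  · exact ⟨a, b, h', rfl⟩
  · exact ⟨b, a, h', Finset.pair_comm a b⟩

lemma char (n : ℕ) (𝔅 : Finset (Finset ℕ)) (m : ℕ → ℕ)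
    (hB : ∀ b ∈ 𝔅, b ⊆ Finset.range n ∧ b.card = 2)
    (hm1 : ∀ x, x < n → m x < n ∧ m x ≠ x ∧ {x, m x} ∈ 𝔅)
    (hm2 : ∀ B ∈ 𝔅, ∀ x ∈ B, B = {x, m x}) :
    qbarW n 2 𝔅 = ↑((((Finset.range n) ×ˢ (Finset.range n)).filter
        (fun p => p.1 < p.2 ∧ p.2 < m p.1 ∧ p.1 < m p.2)).image
        (fun p => ({p.1, p.2} : Finset ℕ))) := by
  ext P
  simp only [qbarW, qstarW, Set.mem_diff, Set.mem_union, Set.mem_setOf_eq,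
    Finset.coe_image, Set.mem_image, Finset.mem_coe, Finset.mem_filter,
    Finset.mem_product, Finset.mem_range]
  constructor
  · rintro ⟨⟨hPr, hP2⟩, hQ⟩
    push_neg at hQ
    obtain ⟨hPB, hPN⟩ := hQ
    obtain ⟨a, b, hab, rfl⟩ := card_two' hP2
    have ha : a < n := by
      have := hPr (by simp : a ∈ ({a,b} : Finset ℕ)); simpa using this
    have hb : b < n := by
      have := hPr (by simp : b ∈ ({a,b} : Finset ℕ)); simpa using this
    have h1 : b < m a := by
      by_contra hcon
      obtain ⟨hma_lt, hma_ne, hma_blk⟩ := hm1 a ha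
      rcases eq_or_lt_of_le (not_lt.mp hcon) with heq | hlt
      · exact hPB (heq ▸ hma_blk)
      · apply hPN _ hma_blk
        refine ⟨⟨hPr, hP2⟩, ⟨(hB _ hma_blk).1, (hB _ hma_blk).2⟩, b, by simp, m a, ?_, hlt, ?_⟩
        · simp only [Finset.mem_insert, Finset.mem_singleton]
          push_neg
          omega
        · rw [erase_pair_right hab.ne]
          exact Finset.pair_comm a (m a)
    have h2 : a < m b := by
      by_contra hcon
      obtain ⟨hmb_lt, hmb_ne, hmb_blk⟩ := hm1 b hb
      rcases eq_or_lt_of_le (not_lt.mp hcon) with heq | hlt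
      · refine hPB ?_
        rw [Finset.pair_comm, ← heq]
        exact hmb_blk
      · apply hPN _ hmb_blk
        refine ⟨⟨hPr, hP2⟩, ⟨(hB _ hmb_blk).1, (hB _ hmb_blk).2⟩, a, by simp, m b, ?_, hlt, ?_⟩
        · simp only [Finset.mem_insert, Finset.mem_singleton]
          push_neg
          omega
        · rw [erase_pair_left hab.ne]
          exact Finset.pair_comm b (m b)
    exact ⟨(a, b), ⟨⟨ha, hb⟩, hab, h1, h2⟩, rfl⟩
  · rintro ⟨⟨a, b⟩, ⟨⟨ha, hb⟩, hab, h1, h2⟩, rfl⟩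
    simp only at hab h1 h2
    have hvert : ({a, b} : Finset ℕ) ⊆ Finset.range n ∧ ({a, b} : Finset ℕ).card = 2 := by
      constructor
      · intro x hx
        simp only [Finset.mem_insert, Finset.mem_singleton] at hx
        rcases hx with rfl | rfl <;> simp [ha, hb]
      · exact Finset.card_pair hab.ne
    refine ⟨hvert, ?_⟩
    rintro (hmem | ⟨B, hBmem, _, _, p, hp, q, hq, hqp, hQ⟩)
    · have := hm2 _ hmem a (by simp)
      have hbm : b ∈ ({a, m a} : Finset ℕ) := this ▸ (by simp : b ∈ ({a,b} : Finset ℕ))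
      simp only [Finset.mem_insert, Finset.mem_singleton] at hbm
      omega
    · simp only [Finset.mem_insert, Finset.mem_singleton] at hp hq
      push_neg at hq
      rcases hp with rfl | rfl
      · rw [erase_pair_left hab.ne] at hQ
        have hbB : b ∈ B := by rw [hQ]; simp
        have hBe := hm2 _ hBmem b hbB
        have hqB : q ∈ B := by rw [hQ]; simp
        rw [hBe] at hqB
        simp only [Finset.mem_insert, Finset.mem_singleton] at hqB
        omega
      · rw [erase_pair_right hab.ne] at hQ
        have haB : a ∈ B := by rw [hQ]; simp
        have hBe := hm2 _ hBmem a haB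
        have hqB : q ∈ B := by rw [hQ]; simp
        rw [hBe] at hqB
        simp only [Finset.mem_insert, Finset.mem_singleton] at hqB
        omega

lemma qbar_ncard (n : ℕ) (𝔅 : Finset (Finset ℕ)) (m : ℕ → ℕ)
    (hB : ∀ b ∈ 𝔅, b ⊆ Finset.range n ∧ b.card = 2)
    (hm1 : ∀ x, x < n → m x < n ∧ m x ≠ x ∧ {x, m x} ∈ 𝔅)
    (hm2 : ∀ B ∈ 𝔅, ∀ x ∈ B, B = {x, m x}) :
    (qbarW n 2 𝔅).ncard = (((Finset.range n) ×ˢ (Finset.range n)).filter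
        (fun p => p.1 < p.2 ∧ p.2 < m p.1 ∧ p.1 < m p.2)).card := by
  rw [char n 𝔅 m hB hm1 hm2, Set.ncard_coe_finset]
  apply Finset.card_image_of_injOn
  intro p hp q hq hpq
  simp only [Finset.mem_coe, Finset.mem_filter, Finset.mem_product] at hp hq
  have hpq' : ({p.1, p.2} : Finset ℕ) = {q.1, q.2} := hpq
  have e := Finset.ext_iff.mp hpq'
  have h1 := (e p.1).mp (by simp)
  have h2 := (e p.2).mp (by simp)
  have h3 := (e q.1).mpr (by simp)
  have h4 := (e q.2).mpr (by simp)
  simp only [Finset.mem_insert, Finset.mem_singleton] at h1 h2 h3 h4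
  have : p.1 = q.1 ∧ p.2 = q.2 := by omega
  exact Prod.ext this.1 this.2


def fmap (w a : ℕ) : ℕ := if a < w then a - 1 else a - 2

def gmap (w y : ℕ) : ℕ := if y + 1 < w then y + 1 else y + 2

lemma fmap_lo {w a : ℕ} (h : a < w) : fmap w a = a - 1 := if_pos h
lemma fmap_hi {w a : ℕ} (h : ¬ a < w) : fmap w a = a - 2 := if_neg h
lemma gmap_lo {w y : ℕ} (h : y + 1 < w) : gmap w y = y + 1 := if_pos h
lemma gmap_hi {w y : ℕ} (h : ¬ y + 1 < w) : gmap w y = y + 2 := if_neg h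

lemma gf {w a : ℕ} (hw0 : w ≠ 0) (h0 : a ≠ 0) (hw : a ≠ w) : gmap w (fmap w a) = a := by
  rcases lt_or_ge a w with h | h
  · rw [fmap_lo h, gmap_lo (show a - 1 + 1 < w by omega)]; omega
  · rw [fmap_hi (show ¬ a < w by omega), gmap_hi (show ¬ a - 2 + 1 < w by omega)]; omega

lemma fg {w y : ℕ} : fmap w (gmap w y) = y := by
  rcases lt_or_ge (y + 1) w with h | h
  · rw [gmap_lo h, fmap_lo h]; omega
  · rw [gmap_hi (show ¬ y + 1 < w by omega), fmap_hi (show ¬ y + 2 < w by omega)]; omega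

lemma g_ne0 {w y : ℕ} : gmap w y ≠ 0 := by
  rcases lt_or_ge (y + 1) w with h | h
  · rw [gmap_lo h]; omega
  · rw [gmap_hi (show ¬ y + 1 < w by omega)]; omega

lemma g_new {w y : ℕ} : gmap w y ≠ w := by
  rcases lt_or_ge (y + 1) w with h | h
  · rw [gmap_lo h]; omega
  · rw [gmap_hi (show ¬ y + 1 < w by omega)]; omega

lemma g_lt {w y n : ℕ} (hy : y < n - 2) (hw : w < n) : gmap w y < n := by
  rcases lt_or_ge (y + 1) w with h | h
  · rw [gmap_lo h]; omega
  · rw [gmap_hi (show ¬ y + 1 < w by omega)]; omega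

lemma g_mono {w y z : ℕ} (h : y < z) : gmap w y < gmap w z := by
  rcases lt_or_ge (y + 1) w with h1 | h1 <;> rcases lt_or_ge (z + 1) w with h2 | h2
  · rw [gmap_lo h1, gmap_lo h2]; omega
  · rw [gmap_lo h1, gmap_hi (show ¬ z + 1 < w by omega)]; omega
  · omega
  · rw [gmap_hi (show ¬ y + 1 < w by omega), gmap_hi (show ¬ z + 1 < w by omega)]; omega

lemma f_lt {w a n : ℕ} (hw0 : w ≠ 0) (ha : a < n) (h0 : a ≠ 0) (hw : a ≠ w) (hwn : w < n) :
    fmap w a < n - 2 := by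
  rcases lt_or_ge a w with h | h
  · rw [fmap_lo h]; omega
  · rw [fmap_hi (show ¬ a < w by omega)]; omega

lemma f_mono {w a b : ℕ} (hw0 : w ≠ 0) (ha0 : a ≠ 0) (haw : a ≠ w) (hb0 : b ≠ 0) (hbw : b ≠ w)
    (h : a < b) : fmap w a < fmap w b := by
  rcases lt_or_ge a w with h1 | h1 <;> rcases lt_or_ge b w with h2 | h2
  · rw [fmap_lo h1, fmap_lo h2]; omega
  · rw [fmap_lo h1, fmap_hi (show ¬ b < w by omega)]; omega
  · omega
  · rw [fmap_hi (show ¬ a < w by omega), fmap_hi (show ¬ b < w by omega)]; omega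

lemma f_inj {w a b : ℕ} (hw0 : w ≠ 0) (ha0 : a ≠ 0) (haw : a ≠ w) (hb0 : b ≠ 0) (hbw : b ≠ w)
    (h : fmap w a = fmap w b) : a = b := by
  rcases lt_or_ge a w with h1 | h1 <;> rcases lt_or_ge b w with h2 | h2 <;>
    [rw [fmap_lo h1, fmap_lo h2] at h; rw [fmap_lo h1, fmap_hi (show ¬ b < w by omega)] at h;
     rw [fmap_hi (show ¬ a < w by omega), fmap_lo h2] at h;
     rw [fmap_hi (show ¬ a < w by omega), fmap_hi (show ¬ b < w by omega)] at h] <;>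
    omega


lemma g_inj {w : ℕ} : Function.Injective (gmap w) := by
  intro x y hxy
  rcases lt_trichotomy x y with h | h | h
  · exact absurd hxy (g_mono h).ne
  · exact h
  · exact absurd hxy.symm (g_mono h).ne

lemma count_split (v w : ℕ) (m : ℕ → ℕ) (hw0 : w ≠ 0) (hw : w < 2*v)
    (hm0 : m 0 = w) (hmw : m w = 0)
    (hmne : ∀ x, x < 2*v → x ≠ 0 → x ≠ w → m x ≠ 0 ∧ m x ≠ w) :
    (((Finset.range (2*v)) ×ˢ (Finset.range (2*v))).filter
        (fun p => p.1 < p.2 ∧ p.2 < m p.1 ∧ p.1 < m p.2)).card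
    = (w - 1) + (((Finset.range (2*v-2)) ×ˢ (Finset.range (2*v-2))).filter
        (fun p => p.1 < p.2 ∧ p.2 < (fun y => fmap w (m (gmap w y))) p.1
          ∧ p.1 < (fun y => fmap w (m (gmap w y))) p.2)).card := by
  set A : Finset (ℕ × ℕ) := (Finset.Ioo 0 w).image (fun b => ((0:ℕ), b)) with hA
  set B2 : Finset (ℕ × ℕ) := ((Finset.range (2*v-2)) ×ˢ (Finset.range (2*v-2))).filter
        (fun p => p.1 < p.2 ∧ p.2 < (fun y => fmap w (m (gmap w y))) p.1
          ∧ p.1 < (fun y => fmap w (m (gmap w y))) p.2) with hB2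
  have he : ((Finset.range (2*v)) ×ˢ (Finset.range (2*v))).filter
        (fun p => p.1 < p.2 ∧ p.2 < m p.1 ∧ p.1 < m p.2)
      = A ∪ B2.image (fun p => (gmap w p.1, gmap w p.2)) := by
    ext ⟨a, b⟩
    simp only [hA, hB2, Finset.mem_union, Finset.mem_filter, Finset.mem_product,
      Finset.mem_range, Finset.mem_image, Finset.mem_Ioo]
    constructor
    · rintro ⟨⟨ha, hb⟩, hab, h1, h2⟩
      by_cases ha0 : a = 0
      · subst ha0
        exact Or.inl ⟨b, ⟨hab, by rwa [hm0] at h1⟩, rfl⟩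
      · right
        have haw : a ≠ w := fun hh => by rw [hh, hmw] at h1; omega
        have hbw : b ≠ w := fun hh => by rw [hh, hmw] at h2; omega
        have hb0 : b ≠ 0 := by omega
        have hma := hmne a ha ha0 haw
        have hmb := hmne b hb hb0 hbw
        refine ⟨(fmap w a, fmap w b), ⟨⟨f_lt hw0 ha ha0 haw hw, f_lt hw0 hb hb0 hbw hw⟩,
          f_mono hw0 ha0 haw hb0 hbw hab, ?_, ?_⟩, ?_⟩
        · show fmap w b < fmap w (m (gmap w (fmap w a)))
          rw [gf hw0 ha0 haw]
          exact f_mono hw0 hb0 hbw hma.1 hma.2 h1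
        · show fmap w a < fmap w (m (gmap w (fmap w b)))
          rw [gf hw0 hb0 hbw]
          exact f_mono hw0 ha0 haw hmb.1 hmb.2 h2
        · show (gmap w (fmap w a), gmap w (fmap w b)) = (a, b)
          rw [gf hw0 ha0 haw, gf hw0 hb0 hbw]
    · rintro (⟨b', ⟨hb1, hb2⟩, heq⟩ | ⟨⟨p1, p2⟩, ⟨⟨hp1, hp2⟩, hplt, hq1, hq2⟩, heq⟩)
      · obtain ⟨rfl, rfl⟩ : 0 = a ∧ b' = b := by
          simpa [Prod.ext_iff] using heq
        have hmb := hmne b' (by omega) (by omega) (by omega)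
        refine ⟨⟨by omega, by omega⟩, by omega, by rw [hm0]; omega, by omega⟩
      · simp only [Prod.ext_iff] at heq
        obtain ⟨rfl, rfl⟩ := heq
        simp only at hplt hq1 hq2
        have hg1 : gmap w p1 < 2*v := g_lt hp1 hw
        have hg2 : gmap w p2 < 2*v := g_lt hp2 hw
        have hX1 := hmne (gmap w p1) hg1 g_ne0 g_new
        have hX2 := hmne (gmap w p2) hg2 g_ne0 g_new
        have t1 : gmap w p2 < gmap w (fmap w (m (gmap w p1))) := g_mono hq1
        rw [gf hw0 hX1.1 hX1.2] at t1
        have t2 : gmap w p1 < gmap w (fmap w (m (gmap w p2))) := g_mono hq2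
        rw [gf hw0 hX2.1 hX2.2] at t2
        exact ⟨⟨hg1, hg2⟩, g_mono hplt, t1, t2⟩
  have hdisj : Disjoint A (B2.image (fun p => (gmap w p.1, gmap w p.2))) := by
    rw [Finset.disjoint_left]
    rintro ⟨a, b⟩ hmem hmem2
    simp only [hA, Finset.mem_image, Finset.mem_Ioo] at hmem
    simp only [Finset.mem_image, Prod.ext_iff] at hmem2
    obtain ⟨b', _, heq⟩ := hmem
    obtain ⟨p, _, hp1, _⟩ := hmem2
    have : a = 0 := by
      have := (Prod.ext_iff.mp heq).1; simpa using this.symm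
    exact g_ne0 (hp1.trans this)
  rw [he, Finset.card_union_of_disjoint hdisj]
  congr 1
  · rw [hA, Finset.card_image_of_injective _ (fun x y hxy => by simpa using hxy),
      Nat.card_Ioo]
    omega
  · rw [Finset.card_image_of_injective]
    intro p q hpq
    simp only [Prod.ext_iff] at hpq
    exact Prod.ext (g_inj hpq.1) (g_inj hpq.2)

end Stmt18

/-- For a Steiner system `S(1, 2, 2v)` (a perfect matching of `{0, ..., 2v-1}`) with
`{0, w}` a block, and `E` the `S(1, 2, 2v-2)` obtained from the remaining blocks via
the order-preserving bijection `{0,...,2v-1} \ {0, w} → {0,...,2v-3}`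
(`a ↦ a - 1` if `a < w`, `a ↦ a - 2` if `a > w`):
`|Q̄(D)| = (w - 1) + |Q̄(E)|`. -/
theorem stmt_18 (v w : ℕ) (𝔅 : Finset (Finset ℕ))
    (h : IsSteiner (2 * v) 1 2 𝔅) (h0w : ({0, w} : Finset ℕ) ∈ 𝔅) :
    (qbarW (2 * v) 2 𝔅).ncard
      = (w - 1) + (qbarW (2 * v - 2) 2
          ((𝔅.erase {0, w}).image fun B =>
            B.image fun a => if a < w then a - 1 else a - 2)).ncard := by
  obtain ⟨hB, hT⟩ := h
  have h0w2 := hB _ h0w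
  have hw0 : w ≠ 0 := by
    intro h'
    subst h'
    simp at h0w2
  have hwlt : w < 2*v := by
    have := h0w2.1 (show w ∈ ({0,w}:Finset ℕ) by simp)
    simpa using this
  have huniq : ∀ B ∈ 𝔅, ∀ B' ∈ 𝔅, ∀ x, x ∈ B → x ∈ B' → B = B' := by
    intro B hB1 B' hB2 x hx hx'
    have hx_lt : x < 2*v := by
      have := (hB _ hB1).1 hx; simpa using this
    have hcard := hT {x} (by simpa using hx_lt) (by simp)
    obtain ⟨C, hC⟩ := Finset.card_eq_one.mp hcard
    have e1 : B ∈ 𝔅.filter (fun b => {x} ⊆ b) := by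
      simp only [Finset.mem_filter, Finset.singleton_subset_iff]
      exact ⟨hB1, hx⟩
    have e2 : B' ∈ 𝔅.filter (fun b => {x} ⊆ b) := by
      simp only [Finset.mem_filter, Finset.singleton_subset_iff]
      exact ⟨hB2, hx'⟩
    rw [hC, Finset.mem_singleton] at e1 e2
    rw [e1, e2]
  have hex : ∀ x, x < 2*v → ∃ B ∈ 𝔅, x ∈ B := by
    intro x hx
    have hcard := hT {x} (by simpa using hx) (by simp)
    have hne : (𝔅.filter fun b => {x} ⊆ b).Nonempty := by
      rw [← Finset.card_pos, hcard]; omega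
    obtain ⟨B, hBm⟩ := hne
    rw [Finset.mem_filter, Finset.singleton_subset_iff] at hBm
    exact ⟨B, hBm.1, hBm.2⟩
  have hm_ex : ∀ x, ∃ y, x < 2*v → (y < 2*v ∧ y ≠ x ∧ {x, y} ∈ 𝔅) := by
    intro x
    by_cases hx : x < 2*v
    · obtain ⟨B, hBm, hxB⟩ := hex x hx
      obtain ⟨c, d, hcd, rfl⟩ := Finset.card_eq_two.mp (hB _ hBm).2
      simp only [Finset.mem_insert, Finset.mem_singleton] at hxB
      rcases hxB with rfl | rfl
      · refine ⟨d, fun _ => ⟨?_, Ne.symm hcd, hBm⟩⟩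
        have := (hB _ hBm).1 (show d ∈ ({x, d} : Finset ℕ) by simp)
        simpa using this
      · refine ⟨c, fun _ => ⟨?_, hcd, ?_⟩⟩
        · have := (hB _ hBm).1 (show c ∈ ({c, x} : Finset ℕ) by simp)
          simpa using this
        · rw [Finset.pair_comm]; exact hBm
    · exact ⟨0, fun h' => absurd h' hx⟩
  choose m hm using hm_ex
  have hm2 : ∀ B ∈ 𝔅, ∀ x ∈ B, B = {x, m x} := by
    intro B hBm x hx
    have hx_lt : x < 2*v := by
      have := (hB _ hBm).1 hx; simpa using this
    exact huniq B hBm _ (hm x hx_lt).2.2 x hx (by simp)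
  have hminv : ∀ x, x < 2*v → m (m x) = x := by
    intro x hx
    obtain ⟨h1, h2, h3⟩ := hm x hx
    have h4 := hm2 _ h3 (m x) (by simp)
    have h5 : x ∈ ({m x, m (m x)} : Finset ℕ) := by
      rw [← h4]; simp
    simp only [Finset.mem_insert, Finset.mem_singleton] at h5
    omega
  have hm0 : m 0 = w := by
    have h3 := (hm 0 (by omega)).2.2
    have heq := huniq _ h0w _ h3 0 (by simp) (by simp)
    have hwmem : w ∈ ({0, m 0} : Finset ℕ) := by
      rw [← heq]; simp
    simp only [Finset.mem_insert, Finset.mem_singleton] at hwmem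
    omega
  have hmw : m w = 0 := by
    rw [← hm0]; exact hminv 0 (by omega)
  have hmne : ∀ x, x < 2*v → x ≠ 0 → x ≠ w → m x ≠ 0 ∧ m x ≠ w := by
    intro x hx hx0 hxw
    constructor
    · intro hh
      have h5 := hminv x hx
      rw [hh, hm0] at h5
      omega
    · intro hh
      have h5 := hminv x hx
      rw [hh, hmw] at h5
      omega
  have havoid : ∀ B ∈ 𝔅, B ≠ ({0,w} : Finset ℕ) → 0 ∉ B ∧ w ∉ B := by
    intro B hBm hne
    constructor
    · intro h0
      exact hne (by rw [hm2 B hBm 0 h0, hm0])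
    · intro hwB
      apply hne
      rw [hm2 B hBm w hwB, hmw]
      exact Finset.pair_comm w 0
  have hmem' : ∀ B ∈ 𝔅.erase ({0,w}:Finset ℕ), ∀ x ∈ B, x < 2*v ∧ x ≠ 0 ∧ x ≠ w := by
    intro B hBm x hx
    rw [Finset.mem_erase] at hBm
    have hav := havoid B hBm.2 hBm.1
    refine ⟨?_, ?_, ?_⟩
    · have := (hB _ hBm.2).1 hx; simpa using this
    · rintro rfl; exact hav.1 hx
    · rintro rfl; exact hav.2 hx
  have hfeq : (fun a : ℕ => if a < w then a - 1 else a - 2) = Stmt18.fmap w := rfl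
  simp only [hfeq]
  set m' : ℕ → ℕ := fun y => Stmt18.fmap w (m (Stmt18.gmap w y)) with hm'def
  set 𝔅' : Finset (Finset ℕ) :=
    (𝔅.erase {0, w}).image (fun B => B.image (Stmt18.fmap w)) with h𝔅'
  have hB'sets : ∀ b ∈ 𝔅', b ⊆ Finset.range (2*v-2) ∧ b.card = 2 := by
    intro b hb
    rw [h𝔅', Finset.mem_image] at hb
    obtain ⟨B, hBe, rfl⟩ := hb
    constructor
    · intro x hx
      rw [Finset.mem_image] at hx
      obtain ⟨u, hu, rfl⟩ := hx
      obtain ⟨hul, hu0, huw⟩ := hmem' B hBe u hu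
      simpa using Stmt18.f_lt hw0 hul hu0 huw hwlt
    · rw [Finset.card_image_of_injOn, (hB _ (Finset.mem_of_mem_erase hBe)).2]
      intro x hx y hy hxy
      obtain ⟨_, hx0, hxw⟩ := hmem' B hBe x hx
      obtain ⟨_, hy0, hyw⟩ := hmem' B hBe y hy
      exact Stmt18.f_inj hw0 hx0 hxw hy0 hyw hxy
  have hpair_mem : ∀ g : ℕ, g < 2*v → g ≠ 0 → g ≠ w →
      ({g, m g} : Finset ℕ) ∈ 𝔅.erase ({0,w} : Finset ℕ) := by
    intro g hgl hg0 hgw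
    rw [Finset.mem_erase]
    refine ⟨?_, (hm g hgl).2.2⟩
    intro hgg
    have h0m : (0:ℕ) ∈ ({g, m g} : Finset ℕ) := by rw [hgg]; simp
    simp only [Finset.mem_insert, Finset.mem_singleton] at h0m
    have := hmne g hgl hg0 hgw
    omega
  have hm1' : ∀ y, y < 2*v-2 → m' y < 2*v-2 ∧ m' y ≠ y ∧ {y, m' y} ∈ 𝔅' := by
    intro y hy
    have hg0 : Stmt18.gmap w y ≠ 0 := Stmt18.g_ne0
    have hgw : Stmt18.gmap w y ≠ w := Stmt18.g_new
    have hgl : Stmt18.gmap w y < 2*v := Stmt18.g_lt hy hwlt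
    obtain ⟨hmg_lt, hmg_ne, hmg_blk⟩ := hm _ hgl
    have hmgne := hmne _ hgl hg0 hgw
    refine ⟨?_, ?_, ?_⟩
    · exact Stmt18.f_lt hw0 hmg_lt hmgne.1 hmgne.2 hwlt
    · intro hh
      rw [hm'def] at hh
      simp only at hh
      have hy2 : Stmt18.fmap w (Stmt18.gmap w y) = y := Stmt18.fg
      have := Stmt18.f_inj hw0 hmgne.1 hmgne.2 hg0 hgw (hh.trans hy2.symm)
      exact hmg_ne this
    · rw [h𝔅', Finset.mem_image]
      refine ⟨{Stmt18.gmap w y, m (Stmt18.gmap w y)}, hpair_mem _ hgl hg0 hgw, ?_⟩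
      rw [Finset.image_insert, Finset.image_singleton]
      rw [Stmt18.fg]
  have hm2' : ∀ B ∈ 𝔅', ∀ x ∈ B, B = {x, m' x} := by
    intro B' hB'm x hx
    rw [h𝔅', Finset.mem_image] at hB'm
    obtain ⟨B, hBe, rfl⟩ := hB'm
    rw [Finset.mem_image] at hx
    obtain ⟨u, hu, rfl⟩ := hx
    obtain ⟨hul, hu0, huw⟩ := hmem' B hBe u hu
    have hBu : B = {u, m u} := hm2 B (Finset.mem_of_mem_erase hBe) u hu
    rw [hBu, Finset.image_insert, Finset.image_singleton]
    congr 1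
    rw [hm'def]
    simp only
    rw [Stmt18.gf hw0 hu0 huw]
  rw [Stmt18.qbar_ncard (2*v) 𝔅 m hB (fun x hx => hm x hx) hm2,
      Stmt18.qbar_ncard (2*v-2) 𝔅' m' hB'sets hm1' hm2']
  exact Stmt18.count_split v w m hw0 hwlt hm0 hmw hmne
end

section
/- For a Steiner system S(1,2,2v) D on [2v], let f_D(n) be the number of designs D' in the orbit of D under Sym([2v]) (equivalently, the number of perfect matchings of [2v]) such that |Q*(D')| = n, where Q*(D') = B' ∪ ⋃_{B∈B'} N⁻(B) in Welter's game Γ_{2v,2}. Then Σ_n f_D(n) x^n = x^{v²} · Π_{i=1}^{v} (x^{2i−1} − 1)/(x − 1) as polynomials in x. -/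
/-!
A perfect matching `M` of a finite `S ⊆ ℕ` with least element `m` is the block `{m, a}` together
with a perfect matching `M'` of `S \ {m, a}`. In `Q*(M)` the pairs through `m` are exactly the
`{m, p}` with `a ≤ p`, every pair `{a, p}` with `p ≠ m` moves to the block `{a, m}`, and the
remaining pairs form `Q*(M')`. Hence `|Q*(M)| = |Q*(M')| + r(a) + |S| - 2` with
`r(a) = #{p ∈ S | a ≤ p}`, and `r` maps `S \ {m}` bijectively onto `1, …, |S| - 1`. For
`|S| = 2v + 2` the choice of `a` thus contributes the factor `x^{2v+1} Σ_{j ≤ 2v} x^j`.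
-/

open Finset

namespace Welter

section Pairs

variable {α : Type*} [DecidableEq α]

lemma pair_eq_pair_iff {x y z w : α} :
    ({x, y} : Finset α) = {z, w} ↔ x = z ∧ y = w ∨ x = w ∧ y = z := by
  rw [← coe_inj, coe_pair, coe_pair, Set.pair_eq_pair_iff]

lemma pair_right_injective (x : α) : Function.Injective fun y : α => ({x, y} : Finset α) := by
  intro y z h
  rcases pair_eq_pair_iff.1 h with h | ⟨rfl, rfl⟩
  exacts [h.2, rfl]

lemma eq_pair_of_card_eq_two {P : Finset α} {x y : α} (hP : #P = 2) (hx : x ∈ P) (hy : y ∈ P)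
    (hxy : x ≠ y) : P = {x, y} :=
  (eq_of_subset_of_card_le (insert_subset hx (singleton_subset_iff.2 hy))
    (by rw [hP, card_pair hxy])).symm

lemma exists_eq_pair_of_mem {P : Finset α} {x : α} (hP : #P = 2) (hx : x ∈ P) :
    ∃ y, x ≠ y ∧ P = {x, y} := by
  obtain ⟨y, hy⟩ := card_eq_one.1 (by rw [card_erase_of_mem hx, hP] : #(P.erase x) = 1)
  have hyP : y ∈ P.erase x := hy ▸ mem_singleton_self y
  exact ⟨y, (ne_of_mem_erase hyP).symm, by rw [← insert_erase hx, hy]⟩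

end Pairs

def IsPerfectMatching (S : Finset ℕ) (M : Finset (Finset ℕ)) : Prop :=
  (∀ b ∈ M, b ⊆ S ∧ #b = 2) ∧ ∀ x ∈ S, ∃! b, b ∈ M ∧ x ∈ b

open scoped Classical in
noncomputable def perfectMatchings (S : Finset ℕ) : Finset (Finset (Finset ℕ)) :=
  S.powerset.powerset.filter (IsPerfectMatching S)

open scoped Classical in
/-- `Q*(M)` in Welter's game on the pairs of `S`: the pair `{x, p}` is in it when `{x, q} ∈ M`
for some `q ≤ p`, where `q = p` means that `{x, p}` is a block and `q < p` that it moves to one. -/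
noncomputable def qstar (S : Finset ℕ) (M : Finset (Finset ℕ)) : Finset (Finset ℕ) :=
  (S.powersetCard 2).filter fun P => ∃ x ∈ P, ∃ p ∈ P, x ≠ p ∧ ∃ q ≤ p, {x, q} ∈ M

noncomputable def qstarSum {R : Type*} [CommSemiring R] (x : R) (S : Finset ℕ) : R :=
  ∑ M ∈ perfectMatchings S, x ^ #(qstar S M)

variable {S : Finset ℕ} {M : Finset (Finset ℕ)} {m a : ℕ}

lemma mem_perfectMatchings : M ∈ perfectMatchings S ↔ IsPerfectMatching S M := by
  simp only [perfectMatchings, mem_filter, mem_powerset, and_iff_right_iff_imp]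
  exact fun hM b hb => mem_powerset.2 (hM.1 b hb).1

lemma mem_qstar {P : Finset ℕ} :
    P ∈ qstar S M ↔ P ⊆ S ∧ #P = 2 ∧ ∃ x ∈ P, ∃ p ∈ P, x ≠ p ∧ ∃ q ≤ p, {x, q} ∈ M := by
  simp only [qstar, mem_filter, mem_powersetCard, and_assoc]

namespace IsPerfectMatching

lemma eq_of_mem (hM : IsPerfectMatching S M) {x : ℕ} {b c : Finset ℕ} (hb : b ∈ M) (hc : c ∈ M)
    (hxb : x ∈ b) (hxc : x ∈ c) : b = c :=
  (hM.2 x ((hM.1 b hb).1 hxb)).unique ⟨hb, hxb⟩ ⟨hc, hxc⟩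

lemma exists_pair_mem (hM : IsPerfectMatching S M) (hm : m ∈ S) :
    ∃ a ∈ S.erase m, {m, a} ∈ M := by
  obtain ⟨b, ⟨hb, hmb⟩, -⟩ := hM.2 m hm
  obtain ⟨a, hma, rfl⟩ := exists_eq_pair_of_mem (hM.1 b hb).2 hmb
  exact ⟨a, mem_erase.2 ⟨hma.symm, (hM.1 _ hb).1 (by simp)⟩, hb⟩

lemma erase_pair (hM : IsPerfectMatching S M) (hma : {m, a} ∈ M) :
    IsPerfectMatching ((S.erase m).erase a) (M.erase {m, a}) := by
  have avoid : ∀ b ∈ M, b ≠ {m, a} → m ∉ b ∧ a ∉ b := fun b hb hne =>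
    ⟨fun h => hne (hM.eq_of_mem hb hma h (by simp)),
      fun h => hne (hM.eq_of_mem hb hma h (by simp))⟩
  refine ⟨fun b hb => ?_, fun x hx => ?_⟩
  · obtain ⟨hne, hb⟩ := mem_erase.1 hb
    refine ⟨fun y hy => ?_, (hM.1 b hb).2⟩
    simp only [mem_erase]
    exact ⟨fun h => (avoid b hb hne).2 (h ▸ hy), fun h => (avoid b hb hne).1 (h ▸ hy),
      (hM.1 b hb).1 hy⟩
  · obtain ⟨hxa, hxm, hxS⟩ := by simpa only [mem_erase] using hx
    obtain ⟨b, ⟨hb, hxb⟩, -⟩ := hM.2 x hxS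
    have hne : b ≠ {m, a} := by
      rintro rfl
      simp only [mem_insert, mem_singleton] at hxb
      omega
    exact ⟨b, ⟨mem_erase.2 ⟨hne, hb⟩, hxb⟩,
      fun c ⟨hc, hxc⟩ => hM.eq_of_mem (mem_of_mem_erase hc) hb hxc hxb⟩

lemma insert_pair (hM : IsPerfectMatching ((S.erase m).erase a) M) (hm : m ∈ S)
    (ha : a ∈ S.erase m) : IsPerfectMatching S (insert {m, a} M) := by
  obtain ⟨ham, haS⟩ := mem_erase.1 ha
  have avoid : ∀ b ∈ M, ∀ y ∈ b, y ≠ m ∧ y ≠ a ∧ y ∈ S := fun b hb y hy => by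
    simpa only [mem_erase, and_left_comm] using (hM.1 b hb).1 hy
  refine ⟨fun b hb => ?_, fun x hx => ?_⟩
  · rcases mem_insert.1 hb with rfl | hb
    · exact ⟨insert_subset hm (singleton_subset_iff.2 haS), card_pair ham.symm⟩
    · exact ⟨fun y hy => (avoid b hb y hy).2.2, (hM.1 b hb).2⟩
  · by_cases hx' : x = m ∨ x = a
    · refine ⟨{m, a}, ⟨mem_insert_self _ _, by simp [hx']⟩, fun c ⟨hc, hxc⟩ => ?_⟩
      rcases mem_insert.1 hc with rfl | hc
      · rfl
      · have := avoid c hc x hxc; omega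
    · obtain ⟨hxm, hxa⟩ := not_or.1 hx'
      obtain ⟨b, ⟨hb, hxb⟩, huniq⟩ := hM.2 x (by simp [hxm, hxa, hx])
      refine ⟨b, ⟨mem_insert_of_mem hb, hxb⟩, fun c ⟨hc, hxc⟩ => ?_⟩
      rcases mem_insert.1 hc with rfl | hc
      · simp only [mem_insert, mem_singleton] at hxc
        omega
      · exact huniq c ⟨hc, hxc⟩

end IsPerfectMatching

lemma perfectMatchings_eq_biUnion (hm : m ∈ S) :
    perfectMatchings S = (S.erase m).biUnion fun a =>
      (perfectMatchings ((S.erase m).erase a)).image (insert {m, a}) := by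
  ext M
  simp only [mem_biUnion, mem_image, mem_perfectMatchings]
  constructor
  · intro hM
    obtain ⟨a, ha, hma⟩ := hM.exists_pair_mem hm
    exact ⟨a, ha, M.erase {m, a}, hM.erase_pair hma, insert_erase hma⟩
  · rintro ⟨a, ha, M', hM', rfl⟩
    exact hM'.insert_pair hm ha

lemma cases_of_pair_mem_insert_pair (hM : IsPerfectMatching ((S.erase m).erase a) M)
    (hmin : ∀ y ∈ S, m ≤ y) {x q : ℕ} (h : {x, q} ∈ insert {m, a} M) :
    (x = m ∧ q = a ∨ x = a ∧ q = m) ∨ (m < x ∧ m < q ∧ x ≠ a ∧ q ≠ a) := by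
  rcases mem_insert.1 h with h | h
  · exact Or.inl (pair_eq_pair_iff.1 h)
  · have hx := (hM.1 _ h).1 (by simp : x ∈ ({x, q} : Finset ℕ))
    have hq := (hM.1 _ h).1 (by simp : q ∈ ({x, q} : Finset ℕ))
    simp only [mem_erase] at hx hq
    have := hmin x hx.2.2
    have := hmin q hq.2.2
    omega

lemma filter_mem_qstar_insert_pair (hM : IsPerfectMatching ((S.erase m).erase a) M)
    (hm : m ∈ S) (hmin : ∀ y ∈ S, m ≤ y) (ha : a ∈ S.erase m) :
    (qstar S (insert {m, a} M)).filter (m ∈ ·) = (S.filter (a ≤ ·)).image fun p => {m, p} := by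
  obtain ⟨ham, haS⟩ := mem_erase.1 ha
  ext P
  simp only [mem_filter, mem_image, mem_qstar]
  constructor
  · rintro ⟨⟨hPS, hPc, x, hx, p, hp, hxp, q, hqp, hxq⟩, hmP⟩
    obtain ⟨y, hmy, rfl⟩ := exists_eq_pair_of_mem hPc hmP
    simp only [mem_insert, mem_singleton] at hx hp
    refine ⟨y, ⟨hPS (by simp), ?_⟩, rfl⟩
    rcases cases_of_pair_mem_insert_pair hM hmin hxq with h | h <;> omega
  · rintro ⟨y, ⟨hyS, hay⟩, rfl⟩
    have hmy : m ≠ y := by have := hmin a haS; omega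
    exact ⟨⟨insert_subset hm (singleton_subset_iff.2 hyS), card_pair hmy, m, by simp, y, by simp,
      hmy, a, hay, mem_insert_self _ _⟩, by simp⟩

lemma filter_partner_mem_qstar_insert_pair (hmin : ∀ y ∈ S, m ≤ y) (ha : a ∈ S.erase m) :
    (qstar S (insert {m, a} M)).filter (fun P => m ∉ P ∧ a ∈ P) =
      ((S.erase m).erase a).image fun p => {a, p} := by
  obtain ⟨ham, haS⟩ := mem_erase.1 ha
  ext P
  simp only [mem_filter, mem_image, mem_qstar, mem_erase]
  constructor
  · rintro ⟨⟨hPS, hPc, -⟩, hmP, haP⟩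
    obtain ⟨y, hay, rfl⟩ := exists_eq_pair_of_mem hPc haP
    exact ⟨y, ⟨Ne.symm hay, fun h => hmP (by simp [h]), hPS (by simp)⟩, rfl⟩
  · rintro ⟨y, ⟨hya, hym, hyS⟩, rfl⟩
    refine ⟨⟨insert_subset haS (singleton_subset_iff.2 hyS), card_pair (Ne.symm hya), a, by simp,
      y, by simp, Ne.symm hya, m, hmin y hyS, ?_⟩, by simp [Ne.symm ham, Ne.symm hym], by simp⟩
    rw [pair_comm]
    exact mem_insert_self _ _

lemma filter_not_mem_qstar_insert_pair :
    (qstar S (insert {m, a} M)).filter (fun P => m ∉ P ∧ a ∉ P) =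
      qstar ((S.erase m).erase a) M := by
  ext P
  simp only [mem_filter, mem_qstar]
  constructor
  · rintro ⟨⟨hPS, hPc, x, hx, p, hp, hxp, q, hqp, hxq⟩, hmP, haP⟩
    refine ⟨fun y hy => ?_, hPc, x, hx, p, hp, hxp, q, hqp, (mem_insert.1 hxq).resolve_left ?_⟩
    · simp only [mem_erase]
      exact ⟨fun h => haP (h ▸ hy), fun h => hmP (h ▸ hy), hPS hy⟩
    · intro h
      have : x ∈ ({m, a} : Finset ℕ) := h ▸ mem_insert_self _ _
      simp only [mem_insert, mem_singleton] at this
      rcases this with rfl | rfl <;> contradiction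
  · rintro ⟨hPS, hPc, x, hx, p, hp, hxp, q, hqp, hxq⟩
    have hPS' : ∀ y ∈ P, y ≠ a ∧ y ≠ m ∧ y ∈ S := fun y hy => by simpa using hPS hy
    exact ⟨⟨fun y hy => (hPS' y hy).2.2, hPc, x, hx, p, hp, hxp, q, hqp, mem_insert_of_mem hxq⟩,
      fun h => (hPS' m h).2.1 rfl, fun h => (hPS' a h).1 rfl⟩

lemma card_qstar_insert_pair (hM : IsPerfectMatching ((S.erase m).erase a) M) (hm : m ∈ S)
    (hmin : ∀ y ∈ S, m ≤ y) (ha : a ∈ S.erase m) :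
    #(qstar S (insert {m, a} M)) =
      #(S.filter (a ≤ ·)) + (#S - 2) + #(qstar ((S.erase m).erase a) M) := by
  set Q := qstar S (insert {m, a} M)
  have hsplit : #Q = #(Q.filter (m ∈ ·)) + #(Q.filter fun P => m ∉ P ∧ a ∈ P) +
      #(Q.filter fun P => m ∉ P ∧ a ∉ P) := by
    rw [add_assoc, ← filter_filter, ← filter_filter, card_filter_add_card_filter_not,
      card_filter_add_card_filter_not]
  rw [hsplit, filter_mem_qstar_insert_pair hM hm hmin ha,
    filter_partner_mem_qstar_insert_pair hmin ha, filter_not_mem_qstar_insert_pair,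
    card_image_of_injective _ (pair_right_injective m),
    card_image_of_injective _ (pair_right_injective a), card_erase_of_mem ha,
    card_erase_of_mem hm]
  omega

lemma strictAntiOn_card_filter_le (S : Finset ℕ) :
    StrictAntiOn (fun a => #(S.filter (a ≤ ·))) (S : Set ℕ) := by
  intro a ha b _ hab
  refine card_lt_card ((ssubset_iff_of_subset (monotone_filter_right S (p := (b ≤ ·))
    (q := (a ≤ ·)) fun _ _ h => hab.le.trans h)).2 ⟨a, mem_filter.2 ⟨ha, le_rfl⟩, ?_⟩)
  simp [hab]

lemma image_erase_card_filter_le (hm : m ∈ S) (hmin : ∀ y ∈ S, m ≤ y) :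
    (S.erase m).image (fun a => #(S.filter (a ≤ ·))) = Ico 1 #S := by
  refine eq_of_subset_of_card_le (fun k hk => ?_) ?_
  · obtain ⟨a, ha, rfl⟩ := mem_image.1 hk
    obtain ⟨ham, haS⟩ := mem_erase.1 ha
    refine mem_Ico.2 ⟨card_pos.2 ⟨a, mem_filter.2 ⟨haS, le_rfl⟩⟩, card_lt_card ?_⟩
    refine (ssubset_iff_of_subset (filter_subset _ S)).2 ⟨m, hm, ?_⟩
    have := hmin a haS
    simp only [mem_filter, not_and, not_le]
    omega
  · rw [card_image_of_injOn ((strictAntiOn_card_filter_le S).injOn.mono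
      (coe_subset.2 (erase_subset m S))), card_erase_of_mem hm, Nat.card_Ico]

variable {R : Type*} [CommSemiring R]

lemma sum_pow_card_filter_le (x : R) (hm : m ∈ S) (hmin : ∀ y ∈ S, m ≤ y) :
    ∑ a ∈ S.erase m, x ^ #(S.filter (a ≤ ·)) = ∑ j ∈ range (#S - 1), x ^ (1 + j) := by
  rw [← sum_Ico_eq_sum_range (x ^ ·), ← image_erase_card_filter_le hm hmin,
    sum_image ((strictAntiOn_card_filter_le S).injOn.mono (coe_subset.2 (erase_subset m S)))]

lemma qstarSum_eq_sum_erase_min (x : R) (hm : m ∈ S) (hmin : ∀ y ∈ S, m ≤ y) :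
    qstarSum x S = ∑ a ∈ S.erase m,
      x ^ (#(S.filter (a ≤ ·)) + (#S - 2)) * qstarSum x ((S.erase m).erase a) := by
  have hdisj : (S.erase m : Set ℕ).PairwiseDisjoint fun a =>
      (perfectMatchings ((S.erase m).erase a)).image (insert {m, a}) := by
    intro a ha a' _ hne
    refine disjoint_left.2 fun M hM hM' => hne ?_
    obtain ⟨N, hN, rfl⟩ := mem_image.1 hM
    obtain ⟨N', -, hNN'⟩ := mem_image.1 hM'
    have hmatch := (mem_perfectMatchings.1 hN).insert_pair hm ha
    refine pair_right_injective m
      (hmatch.eq_of_mem (x := m) (mem_insert_self _ _) ?_ (by simp) (by simp))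
    rw [← hNN']
    exact mem_insert_self _ _
  rw [qstarSum, perfectMatchings_eq_biUnion hm, sum_biUnion hdisj]
  refine sum_congr rfl fun a ha => ?_
  have hinj : Set.InjOn (insert {m, a})
      (perfectMatchings ((S.erase m).erase a) : Set (Finset (Finset ℕ))) := by
    have hnot : ∀ N ∈ perfectMatchings ((S.erase m).erase a), {m, a} ∉ N := fun N hN h => by
      simpa using ((mem_perfectMatchings.1 hN).1 _ h).1 (mem_insert_self m {a})
    intro N hN N' hN' h
    rw [← erase_insert (hnot N hN), ← erase_insert (hnot N' hN')]
    exact congrArg (·.erase {m, a}) h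
  rw [sum_image hinj, qstarSum, mul_sum]
  refine sum_congr rfl fun N hN => ?_
  rw [card_qstar_insert_pair (mem_perfectMatchings.1 hN) hm hmin ha, pow_add]

lemma qstarSum_empty (x : R) : qstarSum x ∅ = 1 := by
  have : perfectMatchings ∅ = {∅} := by
    refine eq_singleton_iff_unique_mem.2 ⟨mem_perfectMatchings.2 ⟨by simp, by simp⟩,
      fun M hM => eq_empty_of_forall_notMem fun b hb => ?_⟩
    obtain ⟨hb, hbc⟩ := (mem_perfectMatchings.1 hM).1 b hb
    simp [subset_empty.1 hb] at hbc
  simp [qstarSum, this, qstar]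

theorem qstarSum_of_card_eq_two_mul (x : R) {v : ℕ} {S : Finset ℕ} (hS : #S = 2 * v) :
    qstarSum x S = x ^ (v ^ 2) * ∏ i ∈ range v, ∑ j ∈ range (2 * i + 1), x ^ j := by
  induction v generalizing S with
  | zero => simp [card_eq_zero.1 hS, qstarSum_empty]
  | succ v ih =>
    have hne : S.Nonempty := card_pos.1 (by omega)
    have hm := S.min'_mem hne
    rw [qstarSum_eq_sum_erase_min x hm fun y hy => S.min'_le y hy]
    have hrest : ∀ a ∈ S.erase (S.min' hne), qstarSum x ((S.erase (S.min' hne)).erase a) =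
        x ^ (v ^ 2) * ∏ i ∈ range v, ∑ j ∈ range (2 * i + 1), x ^ j := fun a ha =>
      ih (by rw [card_erase_of_mem ha, card_erase_of_mem hm]; omega)
    rw [sum_congr rfl fun a ha =>
      congrArg (x ^ (#(S.filter (a ≤ ·)) + (#S - 2)) * ·) (hrest a ha), ← sum_mul]
    simp_rw [pow_add, ← sum_mul]
    rw [sum_pow_card_filter_le x hm fun y hy => S.min'_le y hy, hS, prod_range_succ,
      show 2 * (v + 1) - 1 = 2 * v + 1 by omega, show 2 * (v + 1) - 2 = 2 * v by omega]
    simp_rw [pow_add x 1, ← mul_sum]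
    ring

lemma isSteiner_one_two_iff {n : ℕ} : IsSteiner n 1 2 M ↔ IsPerfectMatching (range n) M := by
  refine and_congr_right fun _ => ⟨fun h x hx => ?_, fun h T hT hTc => ?_⟩
  · simpa [card_eq_one_iff_existsUnique] using h {x} (singleton_subset_iff.2 hx) (card_singleton x)
  · obtain ⟨x, rfl⟩ := card_eq_one.1 hTc
    simpa [card_eq_one_iff_existsUnique] using h x (singleton_subset_iff.1 hT)

lemma mem_qstarW_iff {n : ℕ} (hM : ∀ b ∈ M, b ⊆ range n ∧ #b = 2) {P : Finset ℕ} :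
    P ∈ qstarW n 2 M ↔ P ∈ qstar (range n) M := by
  rw [mem_qstar]
  constructor
  · rintro (hPM | ⟨b, hb, ⟨hP, hPc⟩, -, p, hp, q, -, hqp, rfl⟩)
    · obtain ⟨hP, hPc⟩ := hM P hPM
      obtain ⟨x, y, hxy, rfl⟩ := card_eq_two.1 hPc
      exact ⟨hP, hPc, x, by simp, y, by simp, hxy, y, le_rfl, hPM⟩
    · obtain ⟨x, hpx, hPeq⟩ := exists_eq_pair_of_mem hPc hp
      refine ⟨hP, hPc, x, by simp [hPeq], p, hp, hpx.symm, q, hqp.le, ?_⟩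
      rwa [hPeq, erase_insert (by simpa using hpx), pair_comm] at hb
  · rintro ⟨hP, hPc, x, hx, p, hp, hxp, q, hqp, hxq⟩
    have hPeq := eq_pair_of_card_eq_two hPc hx hp hxp
    rcases hqp.eq_or_lt with rfl | hlt
    · exact Or.inl (hPeq ▸ hxq)
    · refine Or.inr ⟨{x, q}, hxq, ⟨hP, hPc⟩, hM _ hxq, p, hp, q, ?_, hlt, ?_⟩
      · have hxq' : x ≠ q := by rintro rfl; simpa using (hM _ hxq).2
        simp [hPeq, hxq'.symm, hlt.ne]
      · rw [hPeq, pair_comm x p, erase_insert (by simpa using hxp.symm), pair_comm]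

lemma ncard_qstarW {n : ℕ} (hM : IsPerfectMatching (range n) M) :
    (qstarW n 2 M).ncard = #(qstar (range n) M) := by
  rw [show qstarW n 2 M = qstar (range n) M from Set.ext fun P => mem_qstarW_iff hM.1,
    Set.ncard_coe_finset]

end Welter

open Polynomial in
open scoped Classical in
/-- The generating polynomial identity for the game distribution of `S(1, 2, 2v)`:
`Σ_n f_D(n) xⁿ = x^{v²} Π_{i=1}^{v} (x^{2i-1} - 1)/(x - 1)`, where `f_D(n)` is the
number of perfect matchings `M` of `{0, ..., 2v-1}` with `|Q*(M)| = n`; the left-hand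
side is written as the sum of `x^{|Q*(M)|}` over all such matchings `M`, and each
factor `(x^{2i-1} - 1)/(x - 1)` as the geometric sum `Σ_{j<2i-1} x^j`. -/
theorem stmt_19 (v : ℕ) :
    ∑ M ∈ (((Finset.range (2 * v)).powerset.powerset).filter
        fun 𝔅 => IsSteiner (2 * v) 1 2 𝔅),
      (X : Polynomial ℤ) ^ (qstarW (2 * v) 2 M).ncard
    = X ^ (v ^ 2) * ∏ i ∈ Finset.range v, ∑ j ∈ Finset.range (2 * i + 1), X ^ j := by
  have hmatchings : ((Finset.range (2 * v)).powerset.powerset.filter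
      fun 𝔅 => IsSteiner (2 * v) 1 2 𝔅) = Welter.perfectMatchings (range (2 * v)) :=
    filter_congr fun _ _ => Welter.isSteiner_one_two_iff
  rw [hmatchings, sum_congr rfl fun M hM =>
    by rw [Welter.ncard_qstarW (Welter.mem_perfectMatchings.1 hM)]]
  exact Welter.qstarSum_of_card_eq_two_mul X (card_range _)
end
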